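/- arXiv:2308.01121 — 5 statements merged into one kernel-verified Lean document; each statement's English description precedes it below -/
import Mathlib

section
/- Reduction of the dual problem to nonnegative potentials: for every 𝔥 ∈ L²(ℱ_T; ℝᴺ), −D(𝔥) = sup_{Φ ∈ (ℝ₊)ᴺ} ( E[ min_{1 ≤ n ≤ N} (Hⁿ − 𝔥ⁿ − Φⁿ) ] + Σ_{n=1}^N Φⁿ pⁿ ). -/
open MeasureTheory

lemma memLp_inf'_aux {Ω : Type*} {mΩ : MeasurableSpace Ω} (ℙ : Measure Ω)
    (s : Finset ℕ) (hs : s.Nonempty) (f : ℕ → Ω → ℝ) :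
    (∀ n ∈ s, MemLp (f n) 2 ℙ) →
    MemLp (fun ω => s.inf' hs (fun n => f n ω)) 2 ℙ := by
  induction hs using Finset.Nonempty.cons_induction with
  | singleton a => intro h; simpa using h a (by simp)
  | cons a t ha ht ih =>
      intro h
      have he : (fun ω => (Finset.cons a t ha).inf' (Finset.cons_nonempty ha) (fun n => f n ω))
          = fun ω => f a ω ⊓ t.inf' ht (fun n => f n ω) := by
        funext ω; exact Finset.inf'_cons ht _
      rw [he]
      exact (h a (by simp)).inf (ih fun n hn => h n (by simp [hn]))

lemma meas_inf'_aux {Ω : Type*} (mF : MeasurableSpace Ω)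
    (s : Finset ℕ) (hs : s.Nonempty) (f : ℕ → Ω → ℝ) :
    (∀ n ∈ s, Measurable[mF] (f n)) →
    Measurable[mF] (fun ω => s.inf' hs (fun n => f n ω)) := by
  induction hs using Finset.Nonempty.cons_induction with
  | singleton a => intro h; simpa using h a (by simp)
  | cons a t ha ht ih =>
      intro h
      have he : (fun ω => (Finset.cons a t ha).inf' (Finset.cons_nonempty ha) (fun n => f n ω))
          = fun ω => f a ω ⊓ t.inf' ht (fun n => f n ω) := by
        funext ω; exact Finset.inf'_cons ht _
      rw [he]
      exact (h a (by simp)).inf (ih fun n hn => h n (by simp [hn]))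

lemma inf'_add_const_aux (s : Finset ℕ) (hs : s.Nonempty) (g : ℕ → ℝ) (c : ℝ) :
    s.inf' hs (fun n => g n + c) = s.inf' hs g + c := by
  induction hs using Finset.Nonempty.cons_induction with
  | singleton a => simp
  | cons a t ha ht ih =>
      rw [Finset.inf'_cons ht, Finset.inf'_cons ht, ih,
        min_add_add_right]

/-- The dual value function `D(𝔥) := − sup_{(X,Φ) ∈ 𝔓(𝔥)} (E[X] + Σ Φⁿ pⁿ)`, where `𝔓(𝔥)` is the
set of pairs `(X, Φ) ∈ L²(ℱ_T) × ℝᴺ` with `Hⁿ − 𝔥ⁿ ≥ X + Φⁿ` a.s. for all `1 ≤ n ≤ N`. -/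
noncomputable def Dfun {Ω : Type*} (mF : MeasurableSpace Ω) [MeasurableSpace Ω]
    (ℙ : Measure Ω) (N : ℕ) (p : ℕ → ℝ) (H 𝔥 : ℕ → Ω → ℝ) : ℝ :=
  - sSup {v : ℝ | ∃ (X : Ω → ℝ) (Φ : ℕ → ℝ),
      Measurable[mF] X ∧ MemLp X 2 ℙ ∧
      (∀ n ∈ Finset.Icc 1 N, ∀ᵐ ω ∂ℙ, X ω + Φ n ≤ H n ω - 𝔥 n ω) ∧
      v = (∫ ω, X ω ∂ℙ) + ∑ n ∈ Finset.Icc 1 N, Φ n * p n}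

/-- reduction of the dual problem to nonnegative potentials:
`−D(𝔥) = sup_{Φ ∈ ℝ₊ᴺ} ( E[min_{1≤n≤N}(Hⁿ − 𝔥ⁿ − Φⁿ)] + Σ Φⁿ pⁿ )`. -/
theorem stmt10
    {Ω : Type*} (mF : MeasurableSpace Ω) {mΩ : MeasurableSpace Ω} (hmF : mF ≤ mΩ)
    (ℙ : Measure Ω) [IsProbabilityMeasure ℙ]
    (N : ℕ) (hN : 1 ≤ N)
    (p : ℕ → ℝ) (hp0 : ∀ n ∈ Finset.Icc 1 N, 0 < p n)
    (hp1 : ∑ n ∈ Finset.Icc 1 N, p n = 1)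
    (H : ℕ → Ω → ℝ)
    (hHmeas : ∀ n ∈ Finset.Icc 1 N, Measurable[mF] (H n))
    (hH2 : ∀ n ∈ Finset.Icc 1 N, MemLp (H n) 2 ℙ)
    (𝔥 : ℕ → Ω → ℝ)
    (h𝔥meas : ∀ n ∈ Finset.Icc 1 N, Measurable[mF] (𝔥 n))
    (h𝔥2 : ∀ n ∈ Finset.Icc 1 N, MemLp (𝔥 n) 2 ℙ) :
    - Dfun mF ℙ N p H 𝔥
      = sSup {v : ℝ | ∃ Φ : ℕ → ℝ, (∀ n ∈ Finset.Icc 1 N, 0 ≤ Φ n) ∧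
          v = (∫ ω, (Finset.Icc 1 N).inf' (Finset.nonempty_Icc.mpr hN)
                (fun n => H n ω - 𝔥 n ω - Φ n) ∂ℙ)
              + ∑ n ∈ Finset.Icc 1 N, Φ n * p n} := by
  set s : Finset ℕ := Finset.Icc 1 N with hsdef
  have hs : s.Nonempty := Finset.nonempty_Icc.mpr hN
  set A : Set ℝ := {v : ℝ | ∃ (X : Ω → ℝ) (Φ : ℕ → ℝ),
      Measurable[mF] X ∧ MemLp X 2 ℙ ∧
      (∀ n ∈ s, ∀ᵐ ω ∂ℙ, X ω + Φ n ≤ H n ω - 𝔥 n ω) ∧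
      v = (∫ ω, X ω ∂ℙ) + ∑ n ∈ s, Φ n * p n} with hA
  set B : Set ℝ := {v : ℝ | ∃ Φ : ℕ → ℝ, (∀ n ∈ s, 0 ≤ Φ n) ∧
      v = (∫ ω, s.inf' hs (fun n => H n ω - 𝔥 n ω - Φ n) ∂ℙ)
          + ∑ n ∈ s, Φ n * p n} with hB
  have hgoal : - Dfun mF ℙ N p H 𝔥 = sSup A := by
    rw [Dfun, neg_neg]
  rw [hgoal]
  -- integrability of the basic functions
  have hInt : ∀ n ∈ s, Integrable (fun ω => H n ω - 𝔥 n ω) ℙ :=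
    fun n hn => ((hH2 n hn).sub (h𝔥2 n hn)).integrable one_le_two
  -- the bound M
  set M : ℝ := ∑ n ∈ s, (∫ ω, (H n ω - 𝔥 n ω) ∂ℙ) * p n with hM
  have hA_le : ∀ v ∈ A, v ≤ M := by
    rintro v ⟨X, Φ, hXm, hX2, hae, rfl⟩
    have hXint : Integrable X ℙ := hX2.integrable one_le_two
    have key : ∀ n ∈ s, (∫ ω, X ω ∂ℙ) + Φ n ≤ ∫ ω, (H n ω - 𝔥 n ω) ∂ℙ := by
      intro n hn
      have h1 : ∫ ω, (X ω + Φ n) ∂ℙ ≤ ∫ ω, (H n ω - 𝔥 n ω) ∂ℙ :=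
        integral_mono_ae (hXint.add (integrable_const _)) (hInt n hn) (hae n hn)
      simpa [integral_add hXint (integrable_const _)] using h1
    have hsum : (∫ ω, X ω ∂ℙ) + ∑ n ∈ s, Φ n * p n
        = ∑ n ∈ s, ((∫ ω, X ω ∂ℙ) + Φ n) * p n := by
      simp only [add_mul, Finset.sum_add_distrib, ← Finset.mul_sum, hp1, mul_one]
    rw [hsum, hM]
    exact Finset.sum_le_sum fun n hn =>
      mul_le_mul_of_nonneg_right (key n hn) (hp0 n hn).le
  have hBA : B ⊆ A := by
    rintro v ⟨Φ, hΦ, rfl⟩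
    refine ⟨fun ω => s.inf' hs (fun n => H n ω - 𝔥 n ω - Φ n), Φ, ?_, ?_, ?_, rfl⟩
    · exact meas_inf'_aux mF s hs _ fun n hn =>
        ((hHmeas n hn).sub (h𝔥meas n hn)).sub measurable_const
    · exact memLp_inf'_aux ℙ s hs _ fun n hn =>
        (((hH2 n hn).sub (h𝔥2 n hn)).sub (memLp_const _))
    · intro n hn
      filter_upwards with ω
      have := Finset.inf'_le (fun n => H n ω - 𝔥 n ω - Φ n) hn
      linarith
  have hBne : B.Nonempty := by
    refine ⟨_, fun _ => 0, fun n _ => le_rfl, rfl⟩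
  have hAne : A.Nonempty := hBne.mono hBA
  have hAbdd : BddAbove A := ⟨M, hA_le⟩
  have hBbdd : BddAbove B := ⟨M, fun v hv => hA_le v (hBA hv)⟩
  apply le_antisymm
  · -- sSup A ≤ sSup B
    apply csSup_le hAne
    rintro v ⟨X, Φ, hXm, hX2, hae, rfl⟩
    have hXint : Integrable X ℙ := hX2.integrable one_le_two
    set c : ℝ := s.inf' hs Φ with hc
    set Φ' : ℕ → ℝ := fun n => Φ n - c with hΦ'
    have hΦ'nonneg : ∀ n ∈ s, 0 ≤ Φ' n := fun n hn =>
      sub_nonneg.2 (Finset.inf'_le Φ hn)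
    have hshift : ∀ ω, s.inf' hs (fun n => H n ω - 𝔥 n ω - Φ' n)
        = s.inf' hs (fun n => H n ω - 𝔥 n ω - Φ n) + c := by
      intro ω
      have h1 : (fun n => H n ω - 𝔥 n ω - Φ' n)
          = fun n => (H n ω - 𝔥 n ω - Φ n) + c := by
        funext n; simp [hΦ']; ring
      rw [h1, inf'_add_const_aux]
    have hb : ((∫ ω, s.inf' hs (fun n => H n ω - 𝔥 n ω - Φ' n) ∂ℙ)
        + ∑ n ∈ s, Φ' n * p n) ∈ B := ⟨Φ', hΦ'nonneg, rfl⟩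
    refine le_trans ?_ (le_csSup hBbdd hb)
    -- integrability of the inf with Φ
    have hInfInt : Integrable (fun ω => s.inf' hs (fun n => H n ω - 𝔥 n ω - Φ n)) ℙ :=
      (memLp_inf'_aux ℙ s hs _ fun n hn =>
        (((hH2 n hn).sub (h𝔥2 n hn)).sub (memLp_const _))).integrable one_le_two
    -- a.e. X ≤ inf
    have haeX : ∀ᵐ ω ∂ℙ, X ω ≤ s.inf' hs (fun n => H n ω - 𝔥 n ω - Φ n) := by
      have hall : ∀ᵐ ω ∂ℙ, ∀ n ∈ s, X ω + Φ n ≤ H n ω - 𝔥 n ω :=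
        (ae_ball_iff s.countable_toSet).2 hae
      filter_upwards [hall] with ω hω
      apply Finset.le_inf'
      intro n hn
      linarith [hω n hn]
    have hIle : (∫ ω, X ω ∂ℙ) ≤ ∫ ω, s.inf' hs (fun n => H n ω - 𝔥 n ω - Φ n) ∂ℙ :=
      integral_mono_ae hXint hInfInt haeX
    have hIeq : (∫ ω, s.inf' hs (fun n => H n ω - 𝔥 n ω - Φ' n) ∂ℙ)
        = (∫ ω, s.inf' hs (fun n => H n ω - 𝔥 n ω - Φ n) ∂ℙ) + c := by
      simp only [hshift]
      rw [integral_add hInfInt (integrable_const _)]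
      simp
    have hSeq : ∑ n ∈ s, Φ' n * p n = (∑ n ∈ s, Φ n * p n) - c := by
      simp only [hΦ', sub_mul, Finset.sum_sub_distrib, ← Finset.mul_sum, hp1, mul_one]
    rw [hIeq, hSeq]
    linarith
  · exact csSup_le_csSup hAbdd hBne hBA
end

section
/- Existence of an optimal dual potential: for every 𝔥 ∈ L²(ℱ_T; ℝᴺ) there exists Φ_𝔥 ∈ (ℝ₊)ᴺ with min_{1 ≤ n ≤ N} Φ_𝔥ⁿ = 0 and ‖Φ_𝔥‖_∞ ≤ (2/q) E[ max_{1 ≤ n ≤ N} |Hⁿ − 𝔥ⁿ| ], where q := min_{1 ≤ n ≤ N} pⁿ > 0, such that −D(𝔥) = E[ min_{1 ≤ n ≤ N} (Hⁿ − 𝔥ⁿ − Φ_𝔥ⁿ) ] + Σ_{n=1}^N Φ_𝔥ⁿ pⁿ. -/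
open MeasureTheory

section AuxLemmas
open Finset


section Aux

variable {Ω : Type*} {ι : Type*}

lemma measurable_finset_inf' {m : MeasurableSpace Ω} {s : Finset ι} (hs : s.Nonempty)
    {f : ι → Ω → ℝ} (hf : ∀ n ∈ s, Measurable[m] (f n)) :
    Measurable[m] fun ω => s.inf' hs fun n => f n ω := by
  induction hs using Finset.Nonempty.cons_induction with
  | singleton a => simp only [Finset.inf'_singleton]; exact hf a (by simp)
  | cons a t ha ht ih =>
      simp only [Finset.inf'_cons (H := ht)]
      exact (hf a (by simp)).inf (ih fun n hn => hf n (by simp [hn]))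

lemma measurable_finset_sup' {m : MeasurableSpace Ω} {s : Finset ι} (hs : s.Nonempty)
    {f : ι → Ω → ℝ} (hf : ∀ n ∈ s, Measurable[m] (f n)) :
    Measurable[m] fun ω => s.sup' hs fun n => f n ω := by
  induction hs using Finset.Nonempty.cons_induction with
  | singleton a => simp only [Finset.sup'_singleton]; exact hf a (by simp)
  | cons a t ha ht ih =>
      simp only [Finset.sup'_cons (H := ht)]
      exact (hf a (by simp)).sup (ih fun n hn => hf n (by simp [hn]))

lemma memLp_finset_inf' {m : MeasurableSpace Ω} {μ : Measure Ω} {s : Finset ι} (hs : s.Nonempty)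
    {f : ι → Ω → ℝ} (hf : ∀ n ∈ s, MemLp (f n) 2 μ) :
    MemLp (fun ω => s.inf' hs fun n => f n ω) 2 μ := by
  induction hs using Finset.Nonempty.cons_induction with
  | singleton a => simp only [Finset.inf'_singleton]; exact hf a (by simp)
  | cons a t ha ht ih =>
      simp only [Finset.inf'_cons (H := ht)]
      exact (hf a (by simp)).inf (ih fun n hn => hf n (by simp [hn]))

lemma memLp_finset_sup' {m : MeasurableSpace Ω} {μ : Measure Ω} {s : Finset ι} (hs : s.Nonempty)
    {f : ι → Ω → ℝ} (hf : ∀ n ∈ s, MemLp (f n) 2 μ) :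
    MemLp (fun ω => s.sup' hs fun n => f n ω) 2 μ := by
  induction hs using Finset.Nonempty.cons_induction with
  | singleton a => simp only [Finset.sup'_singleton]; exact hf a (by simp)
  | cons a t ha ht ih =>
      simp only [Finset.sup'_cons (H := ht)]
      exact (hf a (by simp)).sup (ih fun n hn => hf n (by simp [hn]))

lemma abs_inf'_le {s : Finset ι} (hs : s.Nonempty) (f : ι → ℝ) :
    |s.inf' hs f| ≤ s.sup' hs fun n => |f n| := by
  rw [abs_le]
  obtain ⟨b, hb⟩ := id hs
  constructor
  · refine Finset.le_inf' hs f fun n hn => ?_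
    have h1 : |f n| ≤ s.sup' hs fun n => |f n| := Finset.le_sup' (fun n => |f n|) hn
    have := neg_abs_le (f n)
    linarith
  · calc s.inf' hs f ≤ f b := Finset.inf'_le _ hb
      _ ≤ |f b| := le_abs_self _
      _ ≤ _ := Finset.le_sup' (fun n => |f n|) hb

lemma inf'_sub_const {s : Finset ι} (hs : s.Nonempty) (f : ι → ℝ) (c : ℝ) :
    (s.inf' hs fun n => f n - c) = s.inf' hs f - c := by
  apply le_antisymm
  · obtain ⟨b, hb, hbe⟩ := s.exists_mem_eq_inf' hs f
    calc (s.inf' hs fun n => f n - c) ≤ f b - c := Finset.inf'_le _ hb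
      _ = s.inf' hs f - c := by rw [hbe]
  · refine Finset.le_inf' hs _ fun n hn => ?_
    have := Finset.inf'_le f hn
    linarith

lemma inf'_add_const {s : Finset ι} (hs : s.Nonempty) (f : ι → ℝ) (c : ℝ) :
    (s.inf' hs fun n => f n + c) = s.inf' hs f + c := by
  have := inf'_sub_const hs (fun n => f n + c) c
  simp only [add_sub_cancel_right] at this
  linarith

end Aux


lemma key {Ω : Type*} (mF : MeasurableSpace Ω) {mΩ : MeasurableSpace Ω} (hmF : mF ≤ mΩ)
    (ℙ : Measure Ω) [IsProbabilityMeasure ℙ] (s : Finset ℕ) (hs : s.Nonempty)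
    (p : ℕ → ℝ) (hp0 : ∀ n ∈ s, 0 < p n) (hp1 : ∑ n ∈ s, p n = 1)
    (G : ℕ → Ω → ℝ) (hGmeasF : ∀ n ∈ s, Measurable[mF] (G n))
    (hG2 : ∀ n ∈ s, MemLp (G n) 2 ℙ) :
    ∃ Φ : ℕ → ℝ, (∀ n ∈ s, 0 ≤ Φ n) ∧ s.inf' hs Φ = 0 ∧
      ((s.sup' hs fun n => |Φ n|)
        ≤ 2 / (s.inf' hs p) * ∫ ω, s.sup' hs (fun n => |G n ω|) ∂ℙ) ∧
      sSup {v : ℝ | ∃ (X : Ω → ℝ) (Φ' : ℕ → ℝ), Measurable[mF] X ∧ MemLp X 2 ℙ ∧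
          (∀ n ∈ s, ∀ᵐ ω ∂ℙ, X ω + Φ' n ≤ G n ω) ∧
          v = (∫ ω, X ω ∂ℙ) + ∑ n ∈ s, Φ' n * p n}
        = (∫ ω, s.inf' hs (fun n => G n ω - Φ n) ∂ℙ) + ∑ n ∈ s, Φ n * p n := by
  classical
  have hGmeas : ∀ n ∈ s, Measurable (G n) := fun n hn => (hGmeasF n hn).mono hmF le_rfl
  have hGint : ∀ n ∈ s, Integrable (G n) ℙ := fun n hn => (hG2 n hn).integrable one_le_two
  set A : Ω → ℝ := fun ω => s.sup' hs fun n => |G n ω| with hAdef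
  have hA2 : MemLp A 2 ℙ := memLp_finset_sup' hs fun n hn => (hG2 n hn).abs
  have hAint : Integrable A ℙ := hA2.integrable one_le_two
  have hA0 : ∀ ω, 0 ≤ A ω := fun ω => by
    obtain ⟨b, hb⟩ := id hs
    exact le_trans (abs_nonneg _) (Finset.le_sup' (fun n => |G n ω|) hb)
  set M : ℝ := ∫ ω, A ω ∂ℙ with hMdef
  have hM0 : 0 ≤ M := integral_nonneg hA0
  set q : ℝ := s.inf' hs p with hqdef
  have hq : 0 < q := (Finset.lt_inf'_iff hs).mpr hp0
  set B : ℝ := 2 / q * M with hBdef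
  have hB0 : 0 ≤ B := mul_nonneg (by positivity) hM0
  set Xm : (ℕ → ℝ) → Ω → ℝ := fun Φ ω => s.inf' hs fun n => G n ω - Φ n with hXmdef
  have hXmF : ∀ Φ, Measurable[mF] (Xm Φ) := fun Φ =>
    measurable_finset_inf' hs fun n hn => (hGmeasF n hn).sub measurable_const
  have hXm2 : ∀ Φ, MemLp (Xm Φ) 2 ℙ := fun Φ =>
    memLp_finset_inf' hs fun n hn => (hG2 n hn).sub (memLp_const _)
  have hXmint : ∀ Φ, Integrable (Xm Φ) ℙ := fun Φ => (hXm2 Φ).integrable one_le_two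
  set val : (ℕ → ℝ) → ℝ := fun Φ => (∫ ω, Xm Φ ω ∂ℙ) + ∑ n ∈ s, Φ n * p n with hvaldef
  have hXmabs : ∀ (Φ : ℕ → ℝ) (ω : Ω), |Xm Φ ω| ≤ A ω + s.sup' hs fun n => |Φ n| := by
    intro Φ ω
    refine (abs_inf'_le hs _).trans (Finset.sup'_le hs _ fun n hn => ?_)
    have h1 : |G n ω| ≤ A ω := Finset.le_sup' (fun n => |G n ω|) hn
    have h2 : |Φ n| ≤ s.sup' hs fun n => |Φ n| := Finset.le_sup' (fun n => |Φ n|) hn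
    have h3 : |G n ω - Φ n| ≤ |G n ω| + |Φ n| := abs_sub _ _
    linarith
  -- the compact set
  set K : Set (ℕ → ℝ) := Set.pi Set.univ fun n => if n ∈ s then Set.Icc 0 B else {0} with hKdef
  have hKcomp : IsCompact K := isCompact_univ_pi fun n => by
    by_cases h : n ∈ s
    · simpa [h] using isCompact_Icc (a := (0:ℝ)) (b := B)
    · simpa [h] using isCompact_singleton (x := (0:ℝ))
  have hK0 : (0 : ℕ → ℝ) ∈ K := by
    intro n _
    by_cases h : n ∈ s <;> simp [h, hB0]
  have hKmem : ∀ Φ ∈ K, ∀ n ∈ s, Φ n ∈ Set.Icc (0:ℝ) B := by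
    intro Φ hΦ n hn
    have := hΦ n (Set.mem_univ n)
    simpa [hn] using this
  -- continuity of val on K
  have hcont : ContinuousOn val K := by
    apply ContinuousOn.add
    · refine continuousOn_of_dominated (bound := fun ω => A ω + B)
        (fun Φ _ => ((hXmF Φ).mono hmF le_rfl).aestronglyMeasurable)
        (fun Φ hΦ => ae_of_all _ fun ω => ?_)
        (hAint.add (integrable_const B))
        (ae_of_all _ fun ω => ?_)
      · show ‖Xm Φ ω‖ ≤ A ω + B
        rw [Real.norm_eq_abs]
        have h1 := hXmabs Φ ω
        have h2 : (s.sup' hs fun n => |Φ n|) ≤ B := Finset.sup'_le hs _ fun n hn => by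
          obtain ⟨ha, hb⟩ := hKmem Φ hΦ n hn
          rw [abs_of_nonneg ha]; exact hb
        linarith
      · exact (Continuous.finset_inf'_apply hs fun n hn =>
          continuous_const.sub (continuous_apply n)).continuousOn
    · exact (continuous_finset_sum s fun n _ =>
        (continuous_apply n).mul continuous_const).continuousOn
  obtain ⟨Φ₀, hΦ₀K, hΦ₀max⟩ := hKcomp.exists_isMaxOn ⟨0, hK0⟩ hcont
  -- shift invariance
  have hshift : ∀ (Φ : ℕ → ℝ) (c : ℝ), val (fun n => Φ n - c) = val Φ := by
    intro Φ c
    have h1 : ∀ ω, Xm (fun n => Φ n - c) ω = Xm Φ ω + c := by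
      intro ω
      show (s.inf' hs fun n => G n ω - (Φ n - c)) = (s.inf' hs fun n => G n ω - Φ n) + c
      have he : (fun n => G n ω - (Φ n - c)) = fun n => (G n ω - Φ n) + c := by
        funext n; ring
      rw [he, inf'_add_const hs]
    have h2 : (∫ ω, Xm (fun n => Φ n - c) ω ∂ℙ) = (∫ ω, Xm Φ ω ∂ℙ) + c := by
      simp only [h1]
      rw [integral_add (hXmint Φ) (integrable_const c), integral_const]
      simp
    have h3 : ∑ n ∈ s, (Φ n - c) * p n = (∑ n ∈ s, Φ n * p n) - c := by
      simp only [sub_mul]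
      rw [Finset.sum_sub_distrib, ← Finset.mul_sum, hp1, mul_one]
    show (∫ ω, Xm (fun n => Φ n - c) ω ∂ℙ) + ∑ n ∈ s, (Φ n - c) * p n = _
    rw [h2, h3]; ring
  -- val only depends on values on s
  have hvcongr : ∀ Φ Ψ : ℕ → ℝ, (∀ n ∈ s, Φ n = Ψ n) → val Φ = val Ψ := by
    intro Φ Ψ h
    have h1 : ∀ ω, Xm Φ ω = Xm Ψ ω := fun ω =>
      Finset.inf'_congr (H := hs) rfl fun n hn => by rw [h n hn]
    show (∫ ω, Xm Φ ω ∂ℙ) + ∑ n ∈ s, Φ n * p n = (∫ ω, Xm Ψ ω ∂ℙ) + ∑ n ∈ s, Ψ n * p n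
    rw [Finset.sum_congr rfl fun n hn => by rw [h n hn]]
    congr 1
    exact integral_congr_ae (ae_of_all _ h1)
  -- val 0 lower bound
  have hv0 : -M ≤ val 0 := by
    have hle : ∀ ω, -A ω ≤ Xm 0 ω := fun ω => Finset.le_inf' hs _ fun n hn => by
      have h2 : |G n ω| ≤ A ω := Finset.le_sup' (fun n => |G n ω|) hn
      have h3 := neg_abs_le (G n ω)
      simp only [Pi.zero_apply, sub_zero]
      linarith
    have h4 : (∫ ω, -A ω ∂ℙ) ≤ ∫ ω, Xm 0 ω ∂ℙ := integral_mono hAint.neg (hXmint 0) hle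
    rw [integral_neg] at h4
    show -M ≤ (∫ ω, Xm 0 ω ∂ℙ) + ∑ n ∈ s, (0:ℝ) * p n
    simp only [zero_mul, Finset.sum_const_zero, add_zero]
    exact h4
  -- global upper bound by val Φ₀
  have hub : ∀ Φ : ℕ → ℝ, val Φ ≤ val Φ₀ := by
    intro Φ
    set c : ℝ := s.inf' hs Φ with hc
    set Ψ : ℕ → ℝ := fun n => if n ∈ s then Φ n - c else 0 with hΨdef
    have hΨe : ∀ n ∈ s, Φ n - c = Ψ n := fun n hn => by simp [hΨdef, hn]
    have hvΨ : val Φ = val Ψ := by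
      rw [← hshift Φ c]; exact hvcongr _ _ hΨe
    have hΨ0 : ∀ n ∈ s, 0 ≤ Ψ n := fun n hn => by
      rw [← hΨe n hn]
      have := Finset.inf'_le Φ hn
      linarith
    set T : ℝ := s.sup' hs Ψ with hTdef
    rw [hvΨ]
    by_cases hcase : T ≤ B
    · have hΨK : Ψ ∈ K := by
        intro n _
        by_cases hn : n ∈ s
        · simp only [hKdef, hn, if_true]
          exact ⟨hΨ0 n hn, le_trans (Finset.le_sup' Ψ hn) hcase⟩
        · simp [hKdef, hΨdef, hn]
      exact hΦ₀max hΨK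
    · push_neg at hcase
      obtain ⟨m, hm, hmT⟩ := s.exists_mem_eq_sup' hs Ψ
      obtain ⟨n₀, hn₀, hn₀e⟩ := s.exists_mem_eq_inf' hs Φ
      have hΨn₀ : Ψ n₀ = 0 := by
        rw [← hΨe n₀ hn₀, hc, hn₀e]; ring
      have hT0 : 0 ≤ T := by rw [← hΨn₀]; exact Finset.le_sup' Ψ hn₀
      have hint1 : (∫ ω, Xm Ψ ω ∂ℙ) ≤ M - T := by
        have hle : ∀ ω, Xm Ψ ω ≤ A ω - T := fun ω => by
          have h1 : Xm Ψ ω ≤ G m ω - Ψ m := Finset.inf'_le _ hm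
          have h2 : G m ω ≤ A ω :=
            (le_abs_self _).trans (Finset.le_sup' (fun n => |G n ω|) hm)
          rw [hTdef, hmT]
          linarith
        calc (∫ ω, Xm Ψ ω ∂ℙ) ≤ ∫ ω, (A ω - T) ∂ℙ :=
              integral_mono (hXmint Ψ) (hAint.sub (integrable_const T)) hle
          _ = M - T := by
              rw [integral_sub hAint (integrable_const T), integral_const]; simp [hMdef]
      have hsum : ∑ n ∈ s, Ψ n * p n ≤ T * (1 - q) := by
        have e1 : ∑ n ∈ s, Ψ n * p n = ∑ n ∈ s.erase n₀, Ψ n * p n := by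
          rw [← Finset.add_sum_erase s _ hn₀, hΨn₀, zero_mul, zero_add]
        have e2 : ∑ n ∈ s.erase n₀, Ψ n * p n ≤ ∑ n ∈ s.erase n₀, T * p n :=
          Finset.sum_le_sum fun n hn =>
            mul_le_mul_of_nonneg_right (Finset.le_sup' Ψ (Finset.mem_of_mem_erase hn))
              (hp0 n (Finset.mem_of_mem_erase hn)).le
        have e3 : ∑ n ∈ s.erase n₀, T * p n = T * (1 - p n₀) := by
          rw [← Finset.mul_sum]
          have h5 : p n₀ + ∑ n ∈ s.erase n₀, p n = 1 := by
            rw [Finset.add_sum_erase s p hn₀]; exact hp1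
          have h6 : ∑ n ∈ s.erase n₀, p n = 1 - p n₀ := by linarith
          rw [h6]
        have e4 : T * (1 - p n₀) ≤ T * (1 - q) := by
          apply mul_le_mul_of_nonneg_left _ hT0
          have := Finset.inf'_le p hn₀
          linarith
        rw [e1]
        linarith
      have hvle : val Ψ ≤ -M := by
        show (∫ ω, Xm Ψ ω ∂ℙ) + ∑ n ∈ s, Ψ n * p n ≤ -M
        have hqT : q * B ≤ q * T := mul_le_mul_of_nonneg_left hcase.le hq.le
        have hqB : q * B = 2 * M := by rw [hBdef]; field_simp
        nlinarith [hint1, hsum]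
      exact le_trans (le_trans hvle hv0) (hΦ₀max hK0)
  -- the optimal potential
  set c₀ : ℝ := s.inf' hs Φ₀ with hc₀def
  have hΦ₀mem := hKmem Φ₀ hΦ₀K
  have hc₀0 : 0 ≤ c₀ := Finset.le_inf' hs _ fun n hn => (hΦ₀mem n hn).1
  have hvs : val (fun n => Φ₀ n - c₀) = val Φ₀ := hshift Φ₀ c₀
  have hub' : ∀ Φ, val Φ ≤ val (fun n => Φ₀ n - c₀) := fun Φ =>
    le_trans (hub Φ) (le_of_eq hvs.symm)
  have hfeasmem : ∀ Φ : ℕ → ℝ, ((∫ ω, Xm Φ ω ∂ℙ) + ∑ n ∈ s, Φ n * p n) ∈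
      {v : ℝ | ∃ (X : Ω → ℝ) (Φ' : ℕ → ℝ), Measurable[mF] X ∧ MemLp X 2 ℙ ∧
        (∀ n ∈ s, ∀ᵐ ω ∂ℙ, X ω + Φ' n ≤ G n ω) ∧
        v = (∫ ω, X ω ∂ℙ) + ∑ n ∈ s, Φ' n * p n} := by
    intro Φ
    refine ⟨Xm Φ, Φ, hXmF Φ, hXm2 Φ, fun n hn => ae_of_all _ fun ω => ?_, rfl⟩
    have h0 : Xm Φ ω ≤ G n ω - Φ n := Finset.inf'_le (fun n => G n ω - Φ n) hn
    linarith
  have hSub : ∀ v ∈ {v : ℝ | ∃ (X : Ω → ℝ) (Φ' : ℕ → ℝ), Measurable[mF] X ∧ MemLp X 2 ℙ ∧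
      (∀ n ∈ s, ∀ᵐ ω ∂ℙ, X ω + Φ' n ≤ G n ω) ∧
      v = (∫ ω, X ω ∂ℙ) + ∑ n ∈ s, Φ' n * p n}, v ≤ val (fun n => Φ₀ n - c₀) := by
    rintro v ⟨X, Φ, hXF, hX2, hfe, rfl⟩
    have hae : ∀ᵐ ω ∂ℙ, ∀ n ∈ (s : Set ℕ), X ω + Φ n ≤ G n ω :=
      (ae_ball_iff s.countable_toSet).mpr fun n hn => hfe n hn
    have hXle : ∀ᵐ ω ∂ℙ, X ω ≤ Xm Φ ω := by
      filter_upwards [hae] with ω hω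
      refine Finset.le_inf' hs _ fun n hn => ?_
      have := hω n hn
      linarith
    have h1 : (∫ ω, X ω ∂ℙ) ≤ ∫ ω, Xm Φ ω ∂ℙ :=
      integral_mono_ae (hX2.integrable one_le_two) (hXmint Φ) hXle
    have h2 : val Φ ≤ val (fun n => Φ₀ n - c₀) := hub' Φ
    have h3 : val Φ = (∫ ω, Xm Φ ω ∂ℙ) + ∑ n ∈ s, Φ n * p n := rfl
    linarith
  refine ⟨fun n => Φ₀ n - c₀, ?_, ?_, ?_, ?_⟩
  · intro n hn
    have := Finset.inf'_le Φ₀ hn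
    simp only []
    linarith
  · rw [inf'_sub_const hs Φ₀ c₀, ← hc₀def, sub_self]
  · refine Finset.sup'_le hs _ fun n hn => ?_
    have h1 := (hΦ₀mem n hn).1
    have h2 := (hΦ₀mem n hn).2
    have h3 : c₀ ≤ Φ₀ n := Finset.inf'_le Φ₀ hn
    rw [abs_of_nonneg (by linarith : (0:ℝ) ≤ Φ₀ n - c₀)]
    show Φ₀ n - c₀ ≤ B
    linarith
  · refine le_antisymm (csSup_le ⟨_, hfeasmem (fun n => Φ₀ n - c₀)⟩ hSub) ?_
    exact le_csSup ⟨_, fun v hv => hSub v hv⟩ (hfeasmem (fun n => Φ₀ n - c₀))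

end AuxLemmas

/-- existence of an optimal dual potential `Φ_𝔥 ∈ ℝ₊ᴺ` with `min_n Φ_𝔥ⁿ = 0` and
`‖Φ_𝔥‖_∞ ≤ (2/q) E[max_n |Hⁿ − 𝔥ⁿ|]` (where `q := min_n pⁿ > 0`), such that
`−D(𝔥) = E[min_n (Hⁿ − 𝔥ⁿ − Φ_𝔥ⁿ)] + Σ Φ_𝔥ⁿ pⁿ`. -/
theorem stmt11
    {Ω : Type*} (mF : MeasurableSpace Ω) {mΩ : MeasurableSpace Ω} (hmF : mF ≤ mΩ)
    (ℙ : Measure Ω) [IsProbabilityMeasure ℙ]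
    (N : ℕ) (hN : 1 ≤ N)
    (p : ℕ → ℝ) (hp0 : ∀ n ∈ Finset.Icc 1 N, 0 < p n)
    (hp1 : ∑ n ∈ Finset.Icc 1 N, p n = 1)
    (H : ℕ → Ω → ℝ)
    (hHmeas : ∀ n ∈ Finset.Icc 1 N, Measurable[mF] (H n))
    (hH2 : ∀ n ∈ Finset.Icc 1 N, MemLp (H n) 2 ℙ)
    (𝔥 : ℕ → Ω → ℝ)
    (h𝔥meas : ∀ n ∈ Finset.Icc 1 N, Measurable[mF] (𝔥 n))
    (h𝔥2 : ∀ n ∈ Finset.Icc 1 N, MemLp (𝔥 n) 2 ℙ) :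
    ∃ Φ : ℕ → ℝ,
      (∀ n ∈ Finset.Icc 1 N, 0 ≤ Φ n) ∧
      (Finset.Icc 1 N).inf' (Finset.nonempty_Icc.mpr hN) Φ = 0 ∧
      (Finset.Icc 1 N).sup' (Finset.nonempty_Icc.mpr hN) (fun n => |Φ n|)
        ≤ (2 / (Finset.Icc 1 N).inf' (Finset.nonempty_Icc.mpr hN) p) *
            ∫ ω, (Finset.Icc 1 N).sup' (Finset.nonempty_Icc.mpr hN)
              (fun n => |H n ω - 𝔥 n ω|) ∂ℙ ∧
      - Dfun mF ℙ N p H 𝔥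
        = (∫ ω, (Finset.Icc 1 N).inf' (Finset.nonempty_Icc.mpr hN)
              (fun n => H n ω - 𝔥 n ω - Φ n) ∂ℙ)
            + ∑ n ∈ Finset.Icc 1 N, Φ n * p n := by
  obtain ⟨Φ, h1, h2, h3, h4⟩ := key mF hmF ℙ (Finset.Icc 1 N) (Finset.nonempty_Icc.mpr hN)
    p hp0 hp1 (fun n ω => H n ω - 𝔥 n ω)
    (fun n hn => (hHmeas n hn).sub (h𝔥meas n hn))
    (fun n hn => (hH2 n hn).sub (h𝔥2 n hn))
  refine ⟨Φ, h1, h2, h3, ?_⟩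
  show - Dfun mF ℙ N p H 𝔥 = _
  rw [Dfun, neg_neg]
  exact h4
end

section
/- Computation of the Fenchel transform of D: for P ∈ L²(ℱ_T; ℝᴺ), define D*(P) := sup_{𝔥 ∈ L²(ℱ_T; ℝᴺ)} ( E[Σ_{n=1}^N 𝔥ⁿ Pⁿ] − D(𝔥) ) ∈ ℝ ∪ {+∞}. Then D*(P) = E[Σ_{n=1}^N Hⁿ Pⁿ] if P ∈ 𝒫_μ(ℱ_T), and D*(P) = +∞ otherwise. -/
open MeasureTheory

/-- The Fenchel transform of `D`, valued in `ℝ ∪ {+∞}` (modeled by `EReal`):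
`D*(P) := sup_{𝔥 ∈ L²(ℱ_T; ℝᴺ)} ( E[Σ 𝔥ⁿ Pⁿ] − D(𝔥) )`. -/
noncomputable def Dstar {Ω : Type*} (mF : MeasurableSpace Ω) [MeasurableSpace Ω]
    (ℙ : Measure Ω) (N : ℕ) (p : ℕ → ℝ) (H : ℕ → Ω → ℝ) (P : ℕ → Ω → ℝ) : EReal :=
  sSup {v : EReal | ∃ 𝔥 : ℕ → Ω → ℝ,
    (∀ n ∈ Finset.Icc 1 N, Measurable[mF] (𝔥 n) ∧ MemLp (𝔥 n) 2 ℙ) ∧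
    v = (((∫ ω, ∑ n ∈ Finset.Icc 1 N, 𝔥 n ω * P n ω ∂ℙ) - Dfun mF ℙ N p H 𝔥 : ℝ) : EReal)}

section AuxLemmas

variable {Ω : Type*}

/-- Product of two L² functions is integrable (probability measure). -/
lemma myIntMul {mΩ : MeasurableSpace Ω} {ℙ : Measure Ω} [IsProbabilityMeasure ℙ]
    {f g : Ω → ℝ} (hf : MemLp f 2 ℙ) (hg : MemLp g 2 ℙ) :
    Integrable (fun ω => f ω * g ω) ℙ := by
  have h : MemLp (f • g) 1 ℙ := hg.smul hf (hpqr := ⟨by rw [inv_one, ENNReal.inv_two_add_inv_two]⟩)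
  exact h.integrable le_rfl

lemma myIntSumMul {mΩ : MeasurableSpace Ω} {ℙ : Measure Ω} [IsProbabilityMeasure ℙ]
    {ι : Type*} {s : Finset ι} {f g : ι → Ω → ℝ}
    (hf : ∀ n ∈ s, MemLp (f n) 2 ℙ) (hg : ∀ n ∈ s, MemLp (g n) 2 ℙ) :
    Integrable (fun ω => ∑ n ∈ s, f n ω * g n ω) ℙ :=
  integrable_finset_sum s fun n hn => myIntMul (hf n hn) (hg n hn)

/-- The set of feasible dual values appearing in `Dfun`. -/
def FeasVals (mF : MeasurableSpace Ω) [MeasurableSpace Ω] (ℙ : Measure Ω)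
    (N : ℕ) (p : ℕ → ℝ) (H 𝔥 : ℕ → Ω → ℝ) : Set ℝ :=
  {v : ℝ | ∃ (X : Ω → ℝ) (Φ : ℕ → ℝ),
      Measurable[mF] X ∧ MemLp X 2 ℙ ∧
      (∀ n ∈ Finset.Icc 1 N, ∀ᵐ ω ∂ℙ, X ω + Φ n ≤ H n ω - 𝔥 n ω) ∧
      v = (∫ ω, X ω ∂ℙ) + ∑ n ∈ Finset.Icc 1 N, Φ n * p n}

/-- Every feasible dual value is bounded above. -/
lemma feas_le (mF : MeasurableSpace Ω) {mΩ : MeasurableSpace Ω}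
    (ℙ : Measure Ω) [IsProbabilityMeasure ℙ]
    {N : ℕ} {p : ℕ → ℝ} (hp0 : ∀ n ∈ Finset.Icc 1 N, 0 < p n)
    (hp1 : ∑ n ∈ Finset.Icc 1 N, p n = 1)
    {H 𝔥 : ℕ → Ω → ℝ}
    (hHi : ∀ n ∈ Finset.Icc 1 N, Integrable (H n) ℙ)
    (h𝔥i : ∀ n ∈ Finset.Icc 1 N, Integrable (𝔥 n) ℙ) :
    ∀ v ∈ FeasVals mF ℙ N p H 𝔥,
      v ≤ ∑ n ∈ Finset.Icc 1 N, p n * ∫ ω, (H n ω - 𝔥 n ω) ∂ℙ := by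
  rintro v ⟨X, Φ, hXm, hX2, hfeas, rfl⟩
  have hXi : Integrable X ℙ := hX2.integrable one_le_two
  have key : ∀ n ∈ Finset.Icc 1 N,
      (∫ ω, X ω ∂ℙ) + Φ n ≤ ∫ ω, (H n ω - 𝔥 n ω) ∂ℙ := by
    intro n hn
    have h1 : (∫ ω, X ω ∂ℙ) + Φ n = ∫ ω, (X ω + Φ n) ∂ℙ := by
      rw [integral_add hXi (integrable_const _), integral_const]
      simp
    rw [h1]
    exact integral_mono_ae (hXi.add (integrable_const _))
      ((hHi n hn).sub (h𝔥i n hn)) (hfeas n hn)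
  have halg : (∫ ω, X ω ∂ℙ) + ∑ n ∈ Finset.Icc 1 N, Φ n * p n
      = ∑ n ∈ Finset.Icc 1 N, p n * ((∫ ω, X ω ∂ℙ) + Φ n) := by
    simp_rw [mul_add, Finset.sum_add_distrib, ← Finset.sum_mul, hp1, one_mul,
      mul_comm (p _) (Φ _)]
  rw [halg]
  exact Finset.sum_le_sum fun n hn =>
    mul_le_mul_of_nonneg_left (key n hn) (hp0 n hn).le

lemma feas_bddAbove (mF : MeasurableSpace Ω) {mΩ : MeasurableSpace Ω}
    (ℙ : Measure Ω) [IsProbabilityMeasure ℙ]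
    {N : ℕ} {p : ℕ → ℝ} (hp0 : ∀ n ∈ Finset.Icc 1 N, 0 < p n)
    (hp1 : ∑ n ∈ Finset.Icc 1 N, p n = 1)
    {H 𝔥 : ℕ → Ω → ℝ}
    (hHi : ∀ n ∈ Finset.Icc 1 N, Integrable (H n) ℙ)
    (h𝔥i : ∀ n ∈ Finset.Icc 1 N, Integrable (𝔥 n) ℙ) :
    BddAbove (FeasVals mF ℙ N p H 𝔥) :=
  ⟨_, fun v hv => feas_le mF ℙ hp0 hp1 hHi h𝔥i v hv⟩

/-- The feasible set is nonempty. -/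
lemma feas_nonempty (mF : MeasurableSpace Ω) {mΩ : MeasurableSpace Ω} (hmF : mF ≤ mΩ)
    (ℙ : Measure Ω) [IsProbabilityMeasure ℙ]
    {N : ℕ} (hN : 1 ≤ N) (p : ℕ → ℝ)
    {H 𝔥 : ℕ → Ω → ℝ}
    (hHm : ∀ n ∈ Finset.Icc 1 N, Measurable[mF] (H n))
    (hH2 : ∀ n ∈ Finset.Icc 1 N, MemLp (H n) 2 ℙ)
    (h𝔥m : ∀ n ∈ Finset.Icc 1 N, Measurable[mF] (𝔥 n))
    (h𝔥2 : ∀ n ∈ Finset.Icc 1 N, MemLp (𝔥 n) 2 ℙ) :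
    (FeasVals mF ℙ N p H 𝔥).Nonempty := by
  have hsne : (Finset.Icc 1 N).Nonempty := ⟨1, by simp [hN]⟩
  set X : Ω → ℝ := fun ω => (Finset.Icc 1 N).inf' hsne (fun n => H n ω - 𝔥 n ω) with hXdef
  have hXm : Measurable[mF] X := by
    have h1 : Measurable[mF] ((Finset.Icc 1 N).inf' hsne (fun n => H n - 𝔥 n)) :=
      Finset.inf'_induction hsne _ (fun f hf g hg => Measurable.inf hf hg)
        (fun n hn => ((hHm n hn).sub (h𝔥m n hn)))
    have heq : X = (Finset.Icc 1 N).inf' hsne (fun n => H n - 𝔥 n) := by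
      funext ω
      rw [hXdef]
      exact (Finset.inf'_apply hsne (fun n => H n - 𝔥 n) ω).symm
    rw [heq]; exact h1
  have hb : ∀ ω, ‖X ω‖ ≤ ‖∑ n ∈ Finset.Icc 1 N, ‖H n ω - 𝔥 n ω‖‖ := by
    intro ω
    obtain ⟨i, hi, hXi⟩ := Finset.exists_mem_eq_inf' hsne (fun n => H n ω - 𝔥 n ω)
    have h1 : ‖X ω‖ = ‖H i ω - 𝔥 i ω‖ := by rw [hXdef]; simp only []; rw [hXi]
    rw [h1]
    calc ‖H i ω - 𝔥 i ω‖ ≤ ∑ n ∈ Finset.Icc 1 N, ‖H n ω - 𝔥 n ω‖ :=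
          Finset.single_le_sum (f := fun n => ‖H n ω - 𝔥 n ω‖)
            (fun n _ => norm_nonneg _) hi
      _ ≤ ‖∑ n ∈ Finset.Icc 1 N, ‖H n ω - 𝔥 n ω‖‖ := le_abs_self _
  have hX2 : MemLp X 2 ℙ := by
    have hbm : MemLp (fun ω => ∑ n ∈ Finset.Icc 1 N, ‖H n ω - 𝔥 n ω‖) 2 ℙ :=
      memLp_finset_sum _ fun n hn => ((hH2 n hn).sub (h𝔥2 n hn)).norm
    exact MemLp.of_le hbm ((hXm.mono hmF le_rfl).aestronglyMeasurable)
      (Filter.Eventually.of_forall hb)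
  refine ⟨_, X, fun _ => 0, hXm, hX2, fun n hn => Filter.Eventually.of_forall fun ω => ?_, rfl⟩
  rw [add_zero]
  exact Finset.inf'_le _ hn

/-- Sharper upper bound using `P ∈ 𝒫_μ(ℱ_T)`. -/
lemma feas_le_P (mF : MeasurableSpace Ω) {mΩ : MeasurableSpace Ω}
    (ℙ : Measure Ω) [IsProbabilityMeasure ℙ]
    {N : ℕ} {p : ℕ → ℝ}
    {H 𝔥 P : ℕ → Ω → ℝ}
    (hH2 : ∀ n ∈ Finset.Icc 1 N, MemLp (H n) 2 ℙ)
    (h𝔥2 : ∀ n ∈ Finset.Icc 1 N, MemLp (𝔥 n) 2 ℙ)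
    (hP2 : ∀ n ∈ Finset.Icc 1 N, MemLp (P n) 2 ℙ)
    (hPae : ∀ᵐ ω ∂ℙ, (∀ n ∈ Finset.Icc 1 N, 0 ≤ P n ω) ∧ ∑ n ∈ Finset.Icc 1 N, P n ω = 1)
    (hPint : ∀ n ∈ Finset.Icc 1 N, ∫ ω, P n ω ∂ℙ = p n) :
    ∀ v ∈ FeasVals mF ℙ N p H 𝔥,
      v ≤ ∫ ω, ∑ n ∈ Finset.Icc 1 N, (H n ω - 𝔥 n ω) * P n ω ∂ℙ := by
  rintro v ⟨X, Φ, hXm, hX2, hfeas, rfl⟩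
  have hXi : Integrable X ℙ := hX2.integrable one_le_two
  have hPi : ∀ n ∈ Finset.Icc 1 N, Integrable (P n) ℙ :=
    fun n hn => (hP2 n hn).integrable one_le_two
  have hLHSi : Integrable (fun ω => X ω + ∑ n ∈ Finset.Icc 1 N, Φ n * P n ω) ℙ :=
    hXi.add (integrable_finset_sum _ fun n hn => (hPi n hn).const_mul _)
  have hRHSi : Integrable (fun ω => ∑ n ∈ Finset.Icc 1 N, (H n ω - 𝔥 n ω) * P n ω) ℙ :=
    myIntSumMul (fun n hn => (hH2 n hn).sub (h𝔥2 n hn)) hP2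
  have hae : ∀ᵐ ω ∂ℙ, X ω + ∑ n ∈ Finset.Icc 1 N, Φ n * P n ω
      ≤ ∑ n ∈ Finset.Icc 1 N, (H n ω - 𝔥 n ω) * P n ω := by
    have hall : ∀ᵐ ω ∂ℙ, ∀ n ∈ Finset.Icc 1 N, X ω + Φ n ≤ H n ω - 𝔥 n ω :=
      (Filter.eventually_all_finset _).2 hfeas
    filter_upwards [hall, hPae] with ω h1 h2
    obtain ⟨h2a, h2b⟩ := h2
    have hstep : X ω + ∑ n ∈ Finset.Icc 1 N, Φ n * P n ω
        = ∑ n ∈ Finset.Icc 1 N, (X ω + Φ n) * P n ω := by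
      simp_rw [add_mul, Finset.sum_add_distrib, ← Finset.mul_sum, h2b, mul_one]
    rw [hstep]
    exact Finset.sum_le_sum fun n hn =>
      mul_le_mul_of_nonneg_right (h1 n hn) (h2a n hn)
  have hmono := integral_mono_ae hLHSi hRHSi hae
  have hLHS : ∫ ω, (X ω + ∑ n ∈ Finset.Icc 1 N, Φ n * P n ω) ∂ℙ
      = (∫ ω, X ω ∂ℙ) + ∑ n ∈ Finset.Icc 1 N, Φ n * p n := by
    rw [integral_add hXi (integrable_finset_sum _ fun n hn => (hPi n hn).const_mul _),
      integral_finset_sum _ fun n hn => (hPi n hn).const_mul _]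
    congr 1
    refine Finset.sum_congr rfl fun n hn => ?_
    rw [integral_const_mul, hPint n hn]
  rw [hLHS] at hmono
  exact hmono

end AuxLemmas

section MoreAux

variable {Ω : Type*}

lemma Dfun_eq_neg_sSup (mF : MeasurableSpace Ω) {mΩ : MeasurableSpace Ω}
    (ℙ : Measure Ω) (N : ℕ) (p : ℕ → ℝ) (H 𝔥 : ℕ → Ω → ℝ) :
    Dfun mF ℙ N p H 𝔥 = - sSup (FeasVals mF ℙ N p H 𝔥) := rfl

/-- Key lower-bound mechanism for `Dstar`. -/
lemma Dstar_ge (mF : MeasurableSpace Ω) {mΩ : MeasurableSpace Ω} (hmF : mF ≤ mΩ)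
    (ℙ : Measure Ω) [IsProbabilityMeasure ℙ]
    {N : ℕ} {p : ℕ → ℝ} (hp0 : ∀ n ∈ Finset.Icc 1 N, 0 < p n)
    (hp1 : ∑ n ∈ Finset.Icc 1 N, p n = 1)
    {H P : ℕ → Ω → ℝ}
    (hH2 : ∀ n ∈ Finset.Icc 1 N, MemLp (H n) 2 ℙ)
    (𝔥 : ℕ → Ω → ℝ)
    (h𝔥m : ∀ n ∈ Finset.Icc 1 N, Measurable[mF] (𝔥 n))
    (h𝔥2 : ∀ n ∈ Finset.Icc 1 N, MemLp (𝔥 n) 2 ℙ)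
    {w : ℝ} (hw : w ∈ FeasVals mF ℙ N p H 𝔥) :
    (((∫ ω, ∑ n ∈ Finset.Icc 1 N, 𝔥 n ω * P n ω ∂ℙ) + w : ℝ) : EReal)
      ≤ Dstar mF ℙ N p H P := by
  have hbdd : BddAbove (FeasVals mF ℙ N p H 𝔥) :=
    feas_bddAbove mF ℙ hp0 hp1 (fun n hn => (hH2 n hn).integrable one_le_two)
      (fun n hn => (h𝔥2 n hn).integrable one_le_two)
  have hsup : w ≤ sSup (FeasVals mF ℙ N p H 𝔥) := le_csSup hbdd hw
  have hmem : (((∫ ω, ∑ n ∈ Finset.Icc 1 N, 𝔥 n ω * P n ω ∂ℙ) - Dfun mF ℙ N p H 𝔥 : ℝ) : EReal)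
      ∈ {v : EReal | ∃ 𝔥' : ℕ → Ω → ℝ,
        (∀ n ∈ Finset.Icc 1 N, Measurable[mF] (𝔥' n) ∧ MemLp (𝔥' n) 2 ℙ) ∧
        v = (((∫ ω, ∑ n ∈ Finset.Icc 1 N, 𝔥' n ω * P n ω ∂ℙ) - Dfun mF ℙ N p H 𝔥' : ℝ) : EReal)} :=
    ⟨𝔥, fun n hn => ⟨h𝔥m n hn, h𝔥2 n hn⟩, rfl⟩
  refine le_trans ?_ (le_sSup hmem)
  rw [EReal.coe_le_coe_iff, Dfun_eq_neg_sSup]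
  linarith

end MoreAux

/-- computation of the Fenchel transform of `D`: for `P ∈ L²(ℱ_T; ℝᴺ)`,
`D*(P) = E[Σ Hⁿ Pⁿ]` if `P ∈ 𝒫_μ(ℱ_T)`, and `D*(P) = +∞` otherwise. -/
theorem stmt14
    {Ω : Type*} (mF : MeasurableSpace Ω) {mΩ : MeasurableSpace Ω} (hmF : mF ≤ mΩ)
    (ℙ : Measure Ω) [IsProbabilityMeasure ℙ]
    (N : ℕ) (hN : 1 ≤ N)
    (p : ℕ → ℝ) (hp0 : ∀ n ∈ Finset.Icc 1 N, 0 < p n)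
    (hp1 : ∑ n ∈ Finset.Icc 1 N, p n = 1)
    (H : ℕ → Ω → ℝ)
    (hHmeas : ∀ n ∈ Finset.Icc 1 N, Measurable[mF] (H n))
    (hH2 : ∀ n ∈ Finset.Icc 1 N, MemLp (H n) 2 ℙ)
    (P : ℕ → Ω → ℝ)
    (hPmeas : ∀ n ∈ Finset.Icc 1 N, Measurable[mF] (P n))
    (hP2 : ∀ n ∈ Finset.Icc 1 N, MemLp (P n) 2 ℙ) :
    (((∀ᵐ ω ∂ℙ, (∀ n ∈ Finset.Icc 1 N, 0 ≤ P n ω) ∧ ∑ n ∈ Finset.Icc 1 N, P n ω = 1) ∧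
        (∀ n ∈ Finset.Icc 1 N, ∫ ω, P n ω ∂ℙ = p n)) →
      Dstar mF ℙ N p H P
        = ((∫ ω, ∑ n ∈ Finset.Icc 1 N, H n ω * P n ω ∂ℙ : ℝ) : EReal)) ∧
    ((¬ ((∀ᵐ ω ∂ℙ, (∀ n ∈ Finset.Icc 1 N, 0 ≤ P n ω) ∧ ∑ n ∈ Finset.Icc 1 N, P n ω = 1) ∧
        (∀ n ∈ Finset.Icc 1 N, ∫ ω, P n ω ∂ℙ = p n))) →
      Dstar mF ℙ N p H P = ⊤) := by
  constructor
  · rintro ⟨hPae, hPint⟩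
    set c : ℝ := ∫ ω, ∑ n ∈ Finset.Icc 1 N, H n ω * P n ω ∂ℙ with hc
    apply le_antisymm
    · apply sSup_le
      rintro v ⟨𝔥, h𝔥, rfl⟩
      have h𝔥m : ∀ n ∈ Finset.Icc 1 N, Measurable[mF] (𝔥 n) := fun n hn => (h𝔥 n hn).1
      have h𝔥2 : ∀ n ∈ Finset.Icc 1 N, MemLp (𝔥 n) 2 ℙ := fun n hn => (h𝔥 n hn).2
      rw [EReal.coe_le_coe_iff]
      have hsup : sSup (FeasVals mF ℙ N p H 𝔥)
          ≤ ∫ ω, ∑ n ∈ Finset.Icc 1 N, (H n ω - 𝔥 n ω) * P n ω ∂ℙ :=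
        csSup_le (feas_nonempty mF hmF ℙ hN p hHmeas hH2 h𝔥m h𝔥2)
          (feas_le_P mF ℙ hH2 h𝔥2 hP2 hPae hPint)
      have hsplit : (∫ ω, ∑ n ∈ Finset.Icc 1 N, 𝔥 n ω * P n ω ∂ℙ)
          + (∫ ω, ∑ n ∈ Finset.Icc 1 N, (H n ω - 𝔥 n ω) * P n ω ∂ℙ) = c := by
        rw [← integral_add (myIntSumMul h𝔥2 hP2)
          (myIntSumMul (f := fun n ω => H n ω - 𝔥 n ω)
            (fun n hn => (hH2 n hn).sub (h𝔥2 n hn)) hP2), hc]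
        congr 1
        funext ω
        rw [← Finset.sum_add_distrib]
        exact Finset.sum_congr rfl fun n _ => by ring
      rw [Dfun_eq_neg_sSup]
      linarith
    · apply le_sSup
      have hD0 : Dfun mF ℙ N p H H = 0 := by
        rw [Dfun_eq_neg_sSup]
        have h0mem : (0 : ℝ) ∈ FeasVals mF ℙ N p H H := by
          refine ⟨fun _ => 0, fun _ => 0, measurable_const, memLp_const 0,
            fun n hn => Filter.Eventually.of_forall fun ω => by simp, by simp⟩
        have hub : ∀ v ∈ FeasVals mF ℙ N p H H, v ≤ 0 := by
          intro v hv
          have := feas_le mF ℙ hp0 hp1 (fun n hn => (hH2 n hn).integrable one_le_two)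
            (fun n hn => (hH2 n hn).integrable one_le_two) v hv
          simpa using this
        have : sSup (FeasVals mF ℙ N p H H) = 0 :=
          le_antisymm (csSup_le ⟨0, h0mem⟩ hub) (le_csSup ⟨0, hub⟩ h0mem)
        rw [this, neg_zero]
      exact ⟨H, fun n hn => ⟨hHmeas n hn, hH2 n hn⟩, by rw [hD0, sub_zero]⟩
  · intro hnot
    set c : ℝ := ∫ ω, ∑ n ∈ Finset.Icc 1 N, H n ω * P n ω ∂ℙ with hc
    have hPi : ∀ n ∈ Finset.Icc 1 N, Integrable (P n) ℙ :=
      fun n hn => (hP2 n hn).integrable one_le_two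
    have key : ∀ M : ℝ, (M : EReal) ≤ Dstar mF ℙ N p H P := by
      intro M
      by_cases hB : ∀ n ∈ Finset.Icc 1 N, ∫ ω, P n ω ∂ℙ = p n
      · -- the a.s. condition must fail
        have hA : ¬ ∀ᵐ ω ∂ℙ, (∀ n ∈ Finset.Icc 1 N, 0 ≤ P n ω) ∧
            ∑ n ∈ Finset.Icc 1 N, P n ω = 1 := fun h => hnot ⟨h, hB⟩
        by_cases hsum : ∀ᵐ ω ∂ℙ, ∑ n ∈ Finset.Icc 1 N, P n ω = 1
        · -- negativity case
          have hneg : ¬ ∀ᵐ ω ∂ℙ, ∀ n ∈ Finset.Icc 1 N, 0 ≤ P n ω :=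
            fun h => hA (h.and hsum)
          obtain ⟨m, hm, hmneg⟩ : ∃ m ∈ Finset.Icc 1 N, ¬ ∀ᵐ ω ∂ℙ, 0 ≤ P m ω := by
            by_contra h
            push_neg at h
            exact hneg ((Filter.eventually_all_finset _).2 h)
          set f : Ω → ℝ := fun ω => max (-(P m ω)) 0 with hfdef
          have hfm : Measurable[mF] f := ((hPmeas m hm).neg).max measurable_const
          have hf0 : ∀ ω, 0 ≤ f ω := fun ω => le_max_right _ _
          have hf2 : MemLp f 2 ℙ := by
            refine MemLp.of_le (hP2 m hm) ((hfm.mono hmF le_rfl).aestronglyMeasurable)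
              (Filter.Eventually.of_forall fun ω => ?_)
            rw [Real.norm_eq_abs, Real.norm_eq_abs, abs_of_nonneg (hf0 ω)]
            exact max_le (neg_le_abs _) (abs_nonneg _)
          set β : ℝ := ∫ ω, f ω * f ω ∂ℙ with hβ
          have hβ0 : (0:ℝ) ≤ β := integral_nonneg fun ω => mul_self_nonneg _
          have hβpos : (0:ℝ) < β := by
            rcases hβ0.lt_or_eq with h | h
            · exact h
            · exfalso
              have hzero : (fun ω => f ω * f ω) =ᵐ[ℙ] 0 :=
                (integral_eq_zero_iff_of_nonneg (fun ω => mul_self_nonneg _)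
                  (myIntMul hf2 hf2)).1 h.symm
              refine hmneg (hzero.mono fun ω hω => ?_)
              have h1 : f ω = 0 := mul_self_eq_zero.1 hω
              have h2 : -(P m ω) ≤ f ω := le_max_left _ _
              rw [h1] at h2
              linarith
          set t : ℝ := max ((M - c) / β) 0 with htdef
          have ht0 : (0:ℝ) ≤ t := le_max_right _ _
          set 𝔥 : ℕ → Ω → ℝ :=
            fun n => if n = m then (fun ω => H n ω - t * f ω) else H n with h𝔥def
          have h𝔥m : ∀ n ∈ Finset.Icc 1 N, Measurable[mF] (𝔥 n) := by
            intro n hn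
            by_cases h : n = m
            · simp only [h𝔥def, if_pos h]
              exact (hHmeas n hn).sub (measurable_const.mul hfm)
            · simp only [h𝔥def, if_neg h]
              exact hHmeas n hn
          have h𝔥2 : ∀ n ∈ Finset.Icc 1 N, MemLp (𝔥 n) 2 ℙ := by
            intro n hn
            by_cases h : n = m
            · simp only [h𝔥def, if_pos h]
              exact (hH2 n hn).sub (hf2.const_mul t)
            · simp only [h𝔥def, if_neg h]
              exact hH2 n hn
          have hwmem : (0:ℝ) ∈ FeasVals mF ℙ N p H 𝔥 := by
            refine ⟨fun _ => 0, fun _ => 0, measurable_const, memLp_const 0,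
              fun n hn => Filter.Eventually.of_forall fun ω => ?_, by simp⟩
            by_cases h : n = m
            · subst h
              simp only [h𝔥def, if_pos rfl, add_zero]
              have heq : H n ω - (H n ω - t * f ω) = t * f ω := by ring
              rw [heq]
              exact mul_nonneg ht0 (hf0 ω)
            · simp [h𝔥def, h]
          have hff : ∀ ω, f ω * P m ω = -(f ω * f ω) := by
            intro ω
            rcases le_or_gt (P m ω) 0 with h | h
            · have hfe : f ω = -(P m ω) := max_eq_left (by linarith)
              rw [hfe]; ring
            · have hfe : f ω = 0 := max_eq_right (by linarith)
              rw [hfe]; ring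
          have hpt : ∀ ω, ∑ n ∈ Finset.Icc 1 N, 𝔥 n ω * P n ω
              = (∑ n ∈ Finset.Icc 1 N, H n ω * P n ω) + t * (f ω * f ω) := by
            intro ω
            have hterm : ∀ n ∈ Finset.Icc 1 N, 𝔥 n ω * P n ω
                = H n ω * P n ω + (if n = m then t * (f ω * f ω) else 0) := by
              intro n hn
              by_cases h : n = m
              · subst h
                simp only [h𝔥def, if_pos rfl]
                have h2 : f ω * P n ω = -(f ω * f ω) := hff ω
                calc (H n ω - t * f ω) * P n ω
                    = H n ω * P n ω - t * (f ω * P n ω) := by ring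
                  _ = H n ω * P n ω + t * (f ω * f ω) := by rw [h2]; ring
              · simp [h𝔥def, h]
            rw [Finset.sum_congr rfl hterm, Finset.sum_add_distrib,
              Finset.sum_ite_eq' (Finset.Icc 1 N) m (fun _ => t * (f ω * f ω)), if_pos hm]
          have hint : ∫ ω, ∑ n ∈ Finset.Icc 1 N, 𝔥 n ω * P n ω ∂ℙ = c + t * β := by
            simp_rw [hpt]
            rw [integral_add (myIntSumMul hH2 hP2) ((myIntMul hf2 hf2).const_mul t),
              integral_const_mul, ← hc, ← hβ]
          refine le_trans ?_ (Dstar_ge mF hmF ℙ hp0 hp1 hH2 𝔥 h𝔥m h𝔥2 hwmem)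
          rw [EReal.coe_le_coe_iff, hint, add_zero]
          have hmul : (M - c) / β * β ≤ t * β :=
            mul_le_mul_of_nonneg_right (le_max_left _ _) hβ0
          rw [div_mul_cancel₀ _ hβpos.ne'] at hmul
          linarith
        · -- the sum-to-one condition fails
          set f : Ω → ℝ := fun ω => (∑ n ∈ Finset.Icc 1 N, P n ω) - 1 with hfdef
          have hSm : Measurable[mF] (fun ω => ∑ n ∈ Finset.Icc 1 N, P n ω) :=
            Finset.measurable_sum _ fun n hn => hPmeas n hn
          have hS2 : MemLp (fun ω => ∑ n ∈ Finset.Icc 1 N, P n ω) 2 ℙ :=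
            memLp_finset_sum _ fun n hn => hP2 n hn
          have hfm : Measurable[mF] f := hSm.sub measurable_const
          have hf2 : MemLp f 2 ℙ := hS2.sub (memLp_const 1)
          set α : ℝ := ∫ ω, f ω * f ω ∂ℙ with hα
          have hα0 : (0:ℝ) ≤ α := integral_nonneg fun ω => mul_self_nonneg _
          have hαpos : (0:ℝ) < α := by
            rcases hα0.lt_or_eq with h | h
            · exact h
            · exfalso
              have hzero : (fun ω => f ω * f ω) =ᵐ[ℙ] 0 :=
                (integral_eq_zero_iff_of_nonneg (fun ω => mul_self_nonneg _)
                  (myIntMul hf2 hf2)).1 h.symm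
              refine hsum (hzero.mono fun ω hω => ?_)
              have h1 : f ω = 0 := mul_self_eq_zero.1 hω
              have h2 : (∑ n ∈ Finset.Icc 1 N, P n ω) - 1 = 0 := h1
              linarith
          set t : ℝ := (M - c) / α with htdef
          set 𝔥 : ℕ → Ω → ℝ := fun n ω => H n ω + t * f ω with h𝔥def
          have h𝔥m : ∀ n ∈ Finset.Icc 1 N, Measurable[mF] (𝔥 n) :=
            fun n hn => (hHmeas n hn).add (measurable_const.mul hfm)
          have h𝔥2 : ∀ n ∈ Finset.Icc 1 N, MemLp (𝔥 n) 2 ℙ :=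
            fun n hn => (hH2 n hn).add (hf2.const_mul t)
          have hwmem : -(t * ∫ ω, f ω ∂ℙ) ∈ FeasVals mF ℙ N p H 𝔥 := by
            refine ⟨fun ω => -(t * f ω), fun _ => 0, (measurable_const.mul hfm).neg,
              (hf2.const_mul t).neg,
              fun n hn => Filter.Eventually.of_forall fun ω =>
                le_of_eq (by simp only [h𝔥def, add_zero]; ring), ?_⟩
            rw [integral_neg, integral_const_mul]
            simp
          have hpt : ∀ ω, ∑ n ∈ Finset.Icc 1 N, 𝔥 n ω * P n ω
              = (∑ n ∈ Finset.Icc 1 N, H n ω * P n ω)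
                + t * (f ω * ∑ n ∈ Finset.Icc 1 N, P n ω) := by
            intro ω
            have hterm : ∀ n ∈ Finset.Icc 1 N, 𝔥 n ω * P n ω
                = H n ω * P n ω + (t * f ω) * P n ω := fun n hn => by
              simp only [h𝔥def]; ring
            rw [Finset.sum_congr rfl hterm, Finset.sum_add_distrib, ← Finset.mul_sum]
            ring
          have hint : ∫ ω, ∑ n ∈ Finset.Icc 1 N, 𝔥 n ω * P n ω ∂ℙ
              = c + t * ∫ ω, f ω * ∑ n ∈ Finset.Icc 1 N, P n ω ∂ℙ := by
            simp_rw [hpt]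
            rw [integral_add (myIntSumMul hH2 hP2) ((myIntMul hf2 hS2).const_mul t),
              integral_const_mul, ← hc]
          have hdiff : (∫ ω, f ω * ∑ n ∈ Finset.Icc 1 N, P n ω ∂ℙ) - (∫ ω, f ω ∂ℙ) = α := by
            rw [← integral_sub (myIntMul hf2 hS2) (hf2.integrable one_le_two), hα]
            congr 1
            funext ω
            simp only [hfdef]
            ring
          refine le_trans ?_ (Dstar_ge mF hmF ℙ hp0 hp1 hH2 𝔥 h𝔥m h𝔥2 hwmem)
          rw [EReal.coe_le_coe_iff, hint]
          have htα : t * α = M - c := div_mul_cancel₀ _ hαpos.ne'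
          have hsplit : t * (∫ ω, f ω * ∑ n ∈ Finset.Icc 1 N, P n ω ∂ℙ)
              - t * (∫ ω, f ω ∂ℙ) = t * α := by rw [← mul_sub, hdiff]
          linarith
      · -- the expectation condition fails
        push_neg at hB
        obtain ⟨m, hm, hδ⟩ := hB
        set δ : ℝ := (∫ ω, P m ω ∂ℙ) - p m with hδdef
        have hδne : δ ≠ 0 := sub_ne_zero.2 hδ
        set t : ℝ := (M - c) / δ with htdef
        set 𝔥 : ℕ → Ω → ℝ := fun n => if n = m then (fun ω => H n ω + t) else H n with h𝔥def
        have h𝔥m : ∀ n ∈ Finset.Icc 1 N, Measurable[mF] (𝔥 n) := by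
          intro n hn
          by_cases h : n = m
          · simp only [h𝔥def, if_pos h]
            exact (hHmeas n hn).add measurable_const
          · simp only [h𝔥def, if_neg h]
            exact hHmeas n hn
        have h𝔥2 : ∀ n ∈ Finset.Icc 1 N, MemLp (𝔥 n) 2 ℙ := by
          intro n hn
          by_cases h : n = m
          · simp only [h𝔥def, if_pos h]
            exact (hH2 n hn).add (memLp_const t)
          · simp only [h𝔥def, if_neg h]
            exact hH2 n hn
        have hwmem : -(t * p m) ∈ FeasVals mF ℙ N p H 𝔥 := by
          refine ⟨fun _ => 0, fun n => if n = m then -t else 0, measurable_const,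
            memLp_const 0, fun n hn => Filter.Eventually.of_forall fun ω => ?_, ?_⟩
          · by_cases h : n = m
            · subst h
              simp only [h𝔥def, if_pos rfl, eq_self_iff_true, if_true]
              have heq : H n ω - (H n ω + t) = -t := by ring
              rw [heq, zero_add]
            · simp [h𝔥def, h]
          · have hterm : ∀ n ∈ Finset.Icc 1 N, (if n = m then -t else 0) * p n
                = (if n = m then -(t * p m) else 0) := by
              intro n hn
              by_cases h : n = m
              · subst h; rw [if_pos rfl, if_pos rfl]; ring
              · rw [if_neg h, if_neg h, zero_mul]
            rw [Finset.sum_congr rfl hterm,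
              Finset.sum_ite_eq' (Finset.Icc 1 N) m (fun _ => -(t * p m)), if_pos hm]
            simp
        have hpt : ∀ ω, ∑ n ∈ Finset.Icc 1 N, 𝔥 n ω * P n ω
            = (∑ n ∈ Finset.Icc 1 N, H n ω * P n ω) + t * P m ω := by
          intro ω
          have hterm : ∀ n ∈ Finset.Icc 1 N, 𝔥 n ω * P n ω
              = H n ω * P n ω + (if n = m then t * P m ω else 0) := by
            intro n hn
            by_cases h : n = m
            · subst h
              simp only [h𝔥def, if_pos rfl, eq_self_iff_true, if_true]
              ring
            · simp [h𝔥def, h]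
          rw [Finset.sum_congr rfl hterm, Finset.sum_add_distrib,
            Finset.sum_ite_eq' (Finset.Icc 1 N) m (fun _ => t * P m ω), if_pos hm]
        have hint : ∫ ω, ∑ n ∈ Finset.Icc 1 N, 𝔥 n ω * P n ω ∂ℙ
            = c + t * ∫ ω, P m ω ∂ℙ := by
          simp_rw [hpt]
          rw [integral_add (myIntSumMul hH2 hP2) ((hPi m hm).const_mul t),
            integral_const_mul, ← hc]
        refine le_trans ?_ (Dstar_ge mF hmF ℙ hp0 hp1 hH2 𝔥 h𝔥m h𝔥2 hwmem)
        rw [EReal.coe_le_coe_iff, hint]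
        have hsplit : t * (∫ ω, P m ω ∂ℙ) - t * p m = t * δ := by
          rw [← mul_sub]
        have htδ : t * δ = M - c := div_mul_cancel₀ _ hδne
        linarith
    rw [EReal.eq_top_iff_forall_lt]
    intro y
    exact lt_of_lt_of_le (EReal.coe_lt_coe_iff.2 (lt_add_one y)) (key (y + 1))
end

section
/- Strong duality for the semi-discrete problem (no duality gap): inf_{P ∈ 𝒫_μ(ℱ_T)} E[Σ_{n=1}^N Hⁿ Pⁿ] = sup_{Φ ∈ (ℝ₊)ᴺ} ( E[ min_{1 ≤ n ≤ N} (Hⁿ − Φⁿ) ] + Σ_{n=1}^N Φⁿ pⁿ ). -/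
open MeasureTheory Filter

section auxstmt15

variable {ι : Type*} {s : Finset ι} (hs : s.Nonempty)

lemma stmt15_inf'_le_inf'_add {f g : ι → ℝ} {K : ℝ} (h : ∀ n ∈ s, f n ≤ g n + K) :
    s.inf' hs f ≤ s.inf' hs g + K := by
  obtain ⟨n, hn, hgn⟩ := Finset.exists_mem_eq_inf' hs g
  rw [hgn]
  exact le_trans (Finset.inf'_le _ hn) (h n hn)

lemma stmt15_abs_inf'_sub_inf'_le {f g : ι → ℝ} {K : ℝ} (h : ∀ n ∈ s, |f n - g n| ≤ K) :
    |s.inf' hs f - s.inf' hs g| ≤ K := by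
  rw [abs_le]
  constructor
  · have := stmt15_inf'_le_inf'_add hs (f := g) (g := f) (K := K) (fun n hn => by
      have := h n hn; rw [abs_le] at this; linarith)
    linarith
  · have := stmt15_inf'_le_inf'_add hs (f := f) (g := g) (K := K) (fun n hn => by
      have := h n hn; rw [abs_le] at this; linarith)
    linarith

lemma stmt15_inf'_sub_const (f : ι → ℝ) (c : ℝ) :
    s.inf' hs (fun n => f n - c) = s.inf' hs f - c := by
  apply le_antisymm
  · obtain ⟨n, hn, hfn⟩ := Finset.exists_mem_eq_inf' hs f
    rw [hfn]
    exact Finset.inf'_le _ hn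
  · refine Finset.le_inf' _ _ (fun n hn => ?_)
    have : s.inf' hs f ≤ f n := Finset.inf'_le _ hn
    linarith

-- inf' bounded in abs by sum of abs
lemma stmt15_abs_inf'_le_sum {f : ι → ℝ} :
    |s.inf' hs f| ≤ ∑ n ∈ s, |f n| := by
  obtain ⟨n, hn, hfn⟩ := Finset.exists_mem_eq_inf' hs f
  rw [hfn]
  exact Finset.single_le_sum (f := fun n => |f n|) (fun i _ => abs_nonneg _) hn

end auxstmt15

open MeasureTheory Filter

lemma stmt15_sup'_filter (I : Finset ℕ) (hI : I.Nonempty) (P : ℕ → Prop) [DecidablePred P]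
    (hA : (I.filter P).Nonempty) (d : ℕ → ℝ) :
    I.sup' hI (fun n => if P n then d n else I.inf' hI d) = (I.filter P).sup' hA d := by
  apply le_antisymm
  · refine Finset.sup'_le _ _ (fun n hn => ?_)
    by_cases h : P n
    · rw [if_pos h]
      exact Finset.le_sup' d (Finset.mem_filter.mpr ⟨hn, h⟩)
    · rw [if_neg h]
      obtain ⟨n₀, hn₀⟩ := hA
      exact le_trans (Finset.inf'_le d (Finset.mem_filter.mp hn₀).1) (Finset.le_sup' d hn₀)
  · refine Finset.sup'_le _ _ (fun n hn => ?_)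
    obtain ⟨hnI, hPn⟩ := Finset.mem_filter.mp hn
    simpa only [hPn, ↓reduceIte] using Finset.le_sup' (fun n => if P n then d n else I.inf' hI d) hnI

lemma stmt15_measurable_inf' {δ : Type*} [MeasurableSpace δ] {ι : Type*} {s : Finset ι}
    (hs : s.Nonempty) {f : ι → δ → ℝ} (hf : ∀ n ∈ s, Measurable (f n)) :
    Measurable (fun ω => s.inf' hs (fun n => f n ω)) := by
  have h : Measurable (s.inf' hs f) :=
    Finset.inf'_induction hs _ (fun _f hf _g hg => Measurable.inf hf hg) hf
  have heq : (fun ω => s.inf' hs (fun n => f n ω)) = s.inf' hs f := by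
    funext ω; simp [Finset.inf'_apply]
  rw [heq]; exact h


set_option maxHeartbeats 1000000 in
lemma stmt15_strassen (I : Finset ℕ) (p : ℕ → ℝ)
    (𝒮 : Finset (Finset ℕ)) (h𝒮 : ∀ S ∈ 𝒮, S.Nonempty ∧ S ⊆ I)
    (c : Finset ℕ → ℝ) (hc0 : ∀ S, 0 ≤ c S)
    (hdual : ∀ d : ℕ → ℝ, ∑ n ∈ I, d n * p n ≤
      ∑ S ∈ 𝒮.attach, c S.1 * S.1.sup' (h𝒮 S.1 S.2).1 d) :
    ∃ q : Finset ℕ → ℕ → ℝ, (∀ S n, 0 ≤ q S n) ∧ (∀ S n, n ∉ S → q S n = 0) ∧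
      (∀ S ∈ 𝒮, ∑ n ∈ I, q S n = 1) ∧
      (∀ n, (∑ S ∈ 𝒮, c S * q S n) = (if n ∈ I then p n else 0)) := by
  classical
  set Δ : Finset ℕ → Set (ℕ → ℝ) := fun S =>
    {q | (∀ m, 0 ≤ q m) ∧ (∀ m, m ∉ S → q m = 0) ∧ ∑ m ∈ S, q m = 1} with hΔ
  have hΔconv : ∀ S, Convex ℝ (Δ S) := by
    intro S
    rintro x ⟨hx0, hxs, hx1⟩ y ⟨hy0, hys, hy1⟩ a b ha hb hab
    refine ⟨?_, ?_, ?_⟩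
    · intro m
      have h1 := hx0 m; have h2 := hy0 m
      have : (a • x + b • y) m = a * x m + b * y m := rfl
      rw [this]; nlinarith
    · intro m hm
      have : (a • x + b • y) m = a * x m + b * y m := rfl
      rw [this, hxs m hm, hys m hm]; ring
    · have : ∀ m ∈ S, (a • x + b • y) m = a * x m + b * y m := fun m _ => rfl
      rw [Finset.sum_congr rfl this, Finset.sum_add_distrib, ← Finset.mul_sum,
        ← Finset.mul_sum, hx1, hy1]
      simpa using hab
  have hΔclosed : ∀ S, IsClosed (Δ S) := by
    intro S
    have h1 : IsClosed {q : ℕ → ℝ | ∀ m, 0 ≤ q m} := by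
      have : {q : ℕ → ℝ | ∀ m, 0 ≤ q m} = ⋂ m, {q : ℕ → ℝ | 0 ≤ q m} := by
        ext q; simp
      rw [this]
      exact isClosed_iInter (fun m => isClosed_le continuous_const (continuous_apply m))
    have h2 : IsClosed {q : ℕ → ℝ | ∀ m, m ∉ S → q m = 0} := by
      have : {q : ℕ → ℝ | ∀ m, m ∉ S → q m = 0}
          = ⋂ m ∈ {m | m ∉ S}, {q : ℕ → ℝ | q m = 0} := by
        ext q; simp
      rw [this]
      exact isClosed_biInter (fun m _ => isClosed_eq (continuous_apply m) continuous_const)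
    have h3 : IsClosed {q : ℕ → ℝ | ∑ m ∈ S, q m = 1} :=
      isClosed_eq (by continuity) continuous_const
    have : Δ S = {q : ℕ → ℝ | ∀ m, 0 ≤ q m} ∩ ({q : ℕ → ℝ | ∀ m, m ∉ S → q m = 0}
        ∩ {q : ℕ → ℝ | ∑ m ∈ S, q m = 1}) := by
      ext q; simp only [hΔ, Set.mem_setOf_eq, Set.mem_inter_iff, and_assoc]
    rw [this]
    exact h1.inter (h2.inter h3)
  have hΔcompact : ∀ S, IsCompact (Δ S) := by
    intro S
    refine IsCompact.of_isClosed_subset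
      (isCompact_univ_pi (fun m => isCompact_Icc (a := (0:ℝ)) (b := 1))) (hΔclosed S) ?_
    rintro q ⟨hq0, hqs, hq1⟩
    intro m _
    refine ⟨hq0 m, ?_⟩
    by_cases hm : m ∈ S
    · rw [← hq1]
      exact Finset.single_le_sum (f := fun k => q k) (fun i _ => hq0 i) hm
    · rw [hqs m hm]; norm_num
  set L : ((↥𝒮) → (ℕ → ℝ)) →ₗ[ℝ] (ℕ → ℝ) :=
    ∑ S : ↥𝒮, c S.1 • (LinearMap.proj (R := ℝ) (φ := fun _ : ↥𝒮 => ℕ → ℝ) S) with hL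
  have hLapp : ∀ Q, L Q = ∑ S : ↥𝒮, c S.1 • Q S := by
    intro Q
    rw [hL]
    simp [LinearMap.sum_apply, LinearMap.smul_apply, LinearMap.proj_apply]
  set D : Set ((↥𝒮) → (ℕ → ℝ)) := Set.pi Set.univ (fun S => Δ S.1) with hD
  set K : Set (ℕ → ℝ) := L '' D with hK
  have hKconv : Convex ℝ K := ((convex_pi (fun S _ => hΔconv S.1)).linear_image L)
  have hLcont : Continuous L := by
    rw [hL]
    refine continuous_pi (fun n => ?_)
    have : (fun Q : (↥𝒮) → (ℕ → ℝ) => (∑ S : ↥𝒮, c S.1 • (LinearMap.proj (R := ℝ) (φ := fun _ : ↥𝒮 => ℕ → ℝ) S)) Q n)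
        = fun Q : (↥𝒮) → (ℕ → ℝ) => ∑ S : ↥𝒮, c S.1 * Q S n := by
      funext Q
      simp [LinearMap.sum_apply, LinearMap.smul_apply, LinearMap.proj_apply]
    rw [this]
    exact continuous_finset_sum _ (fun S _ =>
      continuous_const.mul ((continuous_apply n).comp (continuous_apply S)))
  have hKcomp : IsCompact K :=
    (isCompact_univ_pi (fun S => hΔcompact S.1)).image hLcont
  set pvec : ℕ → ℝ := fun n => if n ∈ I then p n else 0 with hpvec
  -- decomposition of finitely-supported vectors under a linear functional
  have hsingle : ∀ (f : (ℕ → ℝ) →L[ℝ] ℝ) (T : Finset ℕ) (x : ℕ → ℝ),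
      (∀ m, m ∉ T → x m = 0) → f x = ∑ n ∈ T, x n * f (Pi.single n 1) := by
    intro f T x hx
    have hxe : x = ∑ n ∈ T, x n • (Pi.single n 1 : ℕ → ℝ) := by
      funext m
      rw [Finset.sum_apply]
      by_cases hm : m ∈ T
      · rw [Finset.sum_eq_single m]
        · simp
        · intro b hb hbm
          simp [Pi.single_apply, Ne.symm hbm]
        · intro h; exact absurd hm h
      · rw [hx m hm, Finset.sum_eq_zero]
        intro b hb
        have : m ≠ b := by rintro rfl; exact hm hb
        simp [Pi.single_apply, this]
    conv_lhs => rw [hxe]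
    rw [map_sum]
    refine Finset.sum_congr rfl (fun n _ => ?_)
    rw [_root_.map_smul, smul_eq_mul]
  have hpK : pvec ∈ K := by
    by_contra hnot
    obtain ⟨f, u, hfu, hupf⟩ :=
      geometric_hahn_banach_closed_point hKconv hKcomp.isClosed hnot
    set d : ℕ → ℝ := fun n => f (Pi.single n 1) with hd
    have hfp : f pvec = ∑ n ∈ I, p n * d n := by
      rw [hsingle f I pvec (fun m hm => by simp [hpvec, hm])]
      refine Finset.sum_congr rfl (fun n hn => by simp [hpvec, hn, hd])
    have hch := fun S : ↥𝒮 => Finset.exists_mem_eq_sup' (h𝒮 S.1 S.2).1 d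
    choose nS hnSmem hnSsup using hch
    set Q : (↥𝒮) → (ℕ → ℝ) := fun S => Pi.single (nS S) 1 with hQ
    have hQD : Q ∈ D := by
      intro S _
      refine ⟨fun m => ?_, fun m hm => ?_, ?_⟩
      · rw [hQ]; simp only [Pi.single_apply]; positivity
      · rw [hQ]
        have : m ≠ nS S := by rintro rfl; exact hm (hnSmem S)
        simp [Pi.single_apply, this]
      · rw [hQ]
        simp only [Pi.single_apply]
        rw [Finset.sum_ite_eq' S.1 (nS S) (fun _ => (1:ℝ))]
        simp [hnSmem S]
    have hfLQ : f (L Q) = ∑ S ∈ 𝒮.attach, c S.1 * S.1.sup' (h𝒮 S.1 S.2).1 d := by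
      rw [hLapp, map_sum, ← Finset.univ_eq_attach]
      refine Finset.sum_congr rfl (fun S _ => ?_)
      rw [_root_.map_smul, smul_eq_mul, hQ]
      congr 1
      exact (hnSsup S).symm
    have h1 : f (L Q) < u := hfu (L Q) ⟨Q, hQD, rfl⟩
    have h2 := hdual d
    rw [← hfLQ] at h2
    have h3 : ∑ n ∈ I, d n * p n = ∑ n ∈ I, p n * d n :=
      Finset.sum_congr rfl (fun n _ => mul_comm _ _)
    rw [h3, ← hfp] at h2
    linarith
  obtain ⟨Q, hQD, hLQ⟩ := hpK
  refine ⟨fun S n => if h : S ∈ 𝒮 then Q ⟨S, h⟩ n else 0, ?_, ?_, ?_, ?_⟩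
  · intro S n
    by_cases h : S ∈ 𝒮
    · simp only [h, dif_pos]
      exact (hQD ⟨S, h⟩ (Set.mem_univ _)).1 n
    · simp [h]
  · intro S n hn
    by_cases h : S ∈ 𝒮
    · simp only [h, dif_pos]
      exact (hQD ⟨S, h⟩ (Set.mem_univ _)).2.1 n hn
    · simp [h]
  · intro S hS
    simp only [hS, dif_pos]
    rw [← (hQD ⟨S, hS⟩ (Set.mem_univ _)).2.2]
    refine (Finset.sum_subset (h𝒮 S hS).2 (fun n _ hn => ?_)).symm
    exact (hQD ⟨S, hS⟩ (Set.mem_univ _)).2.1 n hn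
  · intro n
    have hthis := congrFun hLQ n
    rw [hLapp] at hthis
    have hgoal : (if n ∈ I then p n else 0) = pvec n := rfl
    rw [hgoal, ← hthis, Finset.sum_apply,
      ← Finset.sum_attach 𝒮 (fun S => c S * if h : S ∈ 𝒮 then Q ⟨S, h⟩ n else 0),
      ← Finset.univ_eq_attach]
    refine Finset.sum_congr rfl (fun S _ => ?_)
    simp [S.2, Subtype.coe_eta]


set_option maxHeartbeats 2000000 in
/-- strong duality for the semi-discrete problem (no duality gap):
`inf_{P ∈ 𝒫_μ(ℱ_T)} E[Σ Hⁿ Pⁿ] = sup_{Φ ∈ ℝ₊ᴺ} ( E[min_{1≤n≤N}(Hⁿ − Φⁿ)] + Σ Φⁿ pⁿ )`. -/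
theorem stmt15
    {Ω : Type*} (mF : MeasurableSpace Ω) {mΩ : MeasurableSpace Ω} (hmF : mF ≤ mΩ)
    (ℙ : Measure Ω) [IsProbabilityMeasure ℙ]
    (N : ℕ) (hN : 1 ≤ N)
    (p : ℕ → ℝ) (hp0 : ∀ n ∈ Finset.Icc 1 N, 0 < p n)
    (hp1 : ∑ n ∈ Finset.Icc 1 N, p n = 1)
    (H : ℕ → Ω → ℝ)
    (hHmeas : ∀ n ∈ Finset.Icc 1 N, Measurable[mF] (H n))
    (hH2 : ∀ n ∈ Finset.Icc 1 N, MemLp (H n) 2 ℙ) :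
    sInf {v : ℝ | ∃ P : ℕ → Ω → ℝ,
        (∀ n ∈ Finset.Icc 1 N, Measurable[mF] (P n)) ∧
        (∀ᵐ ω ∂ℙ, ∀ n ∈ Finset.Icc 1 N, 0 ≤ P n ω) ∧
        (∀ᵐ ω ∂ℙ, ∑ n ∈ Finset.Icc 1 N, P n ω = 1) ∧
        (∀ n ∈ Finset.Icc 1 N, ∫ ω, P n ω ∂ℙ = p n) ∧
        v = ∫ ω, ∑ n ∈ Finset.Icc 1 N, H n ω * P n ω ∂ℙ}
      = sSup {v : ℝ | ∃ Φ : ℕ → ℝ, (∀ n ∈ Finset.Icc 1 N, 0 ≤ Φ n) ∧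
          v = (∫ ω, (Finset.Icc 1 N).inf' (Finset.nonempty_Icc.mpr hN)
                (fun n => H n ω - Φ n) ∂ℙ)
              + ∑ n ∈ Finset.Icc 1 N, Φ n * p n} := by
  classical
  have hI : (Finset.Icc 1 N).Nonempty := Finset.nonempty_Icc.mpr hN
  set I : Finset ℕ := Finset.Icc 1 N with hIdef
  have hHint : ∀ n ∈ I, Integrable (H n) ℙ := fun n hn => (hH2 n hn).integrable one_le_two
  set mf : (ℕ → ℝ) → Ω → ℝ := fun Φ ω => I.inf' hI (fun n => H n ω - Φ n) with hmfdef
  have hmfmeasF : ∀ Φ, Measurable[mF] (mf Φ) := by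
    intro Φ
    exact @stmt15_measurable_inf' Ω mF ℕ I hI (fun n ω => H n ω - Φ n)
      (fun n hn => (hHmeas n hn).sub measurable_const)
  have hmfmeas : ∀ Φ, Measurable (mf Φ) := fun Φ => (hmfmeasF Φ).mono hmF le_rfl
  have hmfint : ∀ Φ, Integrable (mf Φ) ℙ := by
    intro Φ
    refine (integrable_finset_sum I (fun n hn =>
      ((hHint n hn).sub (integrable_const (Φ n))).abs)).mono'
      (hmfmeas Φ).aestronglyMeasurable (ae_of_all _ (fun ω => ?_))
    simpa using stmt15_abs_inf'_le_sum hI (f := fun n => H n ω - Φ n)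
  set gf : (ℕ → ℝ) → ℝ := fun Φ => (∫ ω, mf Φ ω ∂ℙ) + ∑ n ∈ I, Φ n * p n with hgfdef
  -- shift invariance
  have hmfshift : ∀ (Φ : ℕ → ℝ) (c : ℝ) (ω : Ω), mf (fun n => Φ n + c) ω = mf Φ ω - c := by
    intro Φ c ω
    simp only [hmfdef]
    have : ∀ n ∈ I, H n ω - (Φ n + c) = (H n ω - Φ n) - c := fun n _ => by ring
    rw [Finset.inf'_congr hI rfl this]
    exact stmt15_inf'_sub_const hI _ c
  have hshift : ∀ (Φ : ℕ → ℝ) (c : ℝ), gf (fun n => Φ n + c) = gf Φ := by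
    intro Φ c
    simp only [hgfdef]
    have h1 : ∫ ω, mf (fun n => Φ n + c) ω ∂ℙ = (∫ ω, mf Φ ω ∂ℙ) - c := by
      rw [show (fun ω => mf (fun n => Φ n + c) ω) = fun ω => mf Φ ω - c from
        funext (hmfshift Φ c), integral_sub (hmfint Φ) (integrable_const c)]
      simp
    have h2 : ∑ n ∈ I, (Φ n + c) * p n = (∑ n ∈ I, Φ n * p n) + c := by
      have : ∀ n ∈ I, (Φ n + c) * p n = Φ n * p n + c * p n := fun n _ => by ring
      rw [Finset.sum_congr rfl this, Finset.sum_add_distrib, ← Finset.mul_sum, hp1, mul_one]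
    rw [h1, h2]
    ring
  have hcongr : ∀ Φ Ψ : ℕ → ℝ, (∀ n ∈ I, Φ n = Ψ n) → gf Φ = gf Ψ := by
    intro Φ Ψ h
    simp only [hgfdef]
    have h1 : ∀ ω, mf Φ ω = mf Ψ ω := by
      intro ω
      rw [hmfdef]
      exact Finset.inf'_congr hI rfl (fun n hn => by rw [h n hn])
    rw [show (fun ω => mf Φ ω) = fun ω => mf Ψ ω from funext h1,
      Finset.sum_congr rfl (fun n hn => by rw [h n hn])]
  -- the two sets
  set Sp : Set ℝ := {v : ℝ | ∃ P : ℕ → Ω → ℝ,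
        (∀ n ∈ I, Measurable[mF] (P n)) ∧
        (∀ᵐ ω ∂ℙ, ∀ n ∈ I, 0 ≤ P n ω) ∧
        (∀ᵐ ω ∂ℙ, ∑ n ∈ I, P n ω = 1) ∧
        (∀ n ∈ I, ∫ ω, P n ω ∂ℙ = p n) ∧
        v = ∫ ω, ∑ n ∈ I, H n ω * P n ω ∂ℙ} with hSp
  set Sd : Set ℝ := {v : ℝ | ∃ Φ : ℕ → ℝ, (∀ n ∈ I, 0 ≤ Φ n) ∧ v = gf Φ} with hSd
  -- weak duality
  have hweak : ∀ v ∈ Sp, ∀ w ∈ Sd, w ≤ v := by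
    rw [hSp, hSd]
    rintro v ⟨P, hPmeasF, hP0, hPs1, hPm, rfl⟩ w ⟨Φ, hΦ0, rfl⟩
    have hPmeas : ∀ n ∈ I, Measurable (P n) := fun n hn => (hPmeasF n hn).mono hmF le_rfl
    have hPb : ∀ n ∈ I, ∀ᵐ ω ∂ℙ, ‖P n ω‖ ≤ 1 := by
      intro n hn
      filter_upwards [hP0, hPs1] with ω h0 h1
      rw [Real.norm_eq_abs, abs_of_nonneg (h0 n hn), ← h1]
      exact Finset.single_le_sum (f := fun m => P m ω) (fun m hm => h0 m hm) hn
    have hPint1 : ∀ n ∈ I, Integrable (P n) ℙ := fun n hn =>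
      (integrable_const (1:ℝ)).mono' (hPmeas n hn).aestronglyMeasurable (hPb n hn)
    have hHP : ∀ n ∈ I, Integrable (fun ω => H n ω * P n ω) ℙ := by
      intro n hn
      refine (hHint n hn).abs.mono'
        (((hHmeas n hn).mono hmF le_rfl).mul (hPmeas n hn)).aestronglyMeasurable ?_
      filter_upwards [hPb n hn] with ω hb
      rw [Real.norm_eq_abs, abs_mul]
      calc |H n ω| * |P n ω| ≤ |H n ω| * 1 := by
            rw [Real.norm_eq_abs] at hb
            exact mul_le_mul_of_nonneg_left hb (abs_nonneg _)
        _ = |H n ω| := mul_one _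
    have hkey : ∀ᵐ ω ∂ℙ, mf Φ ω + ∑ n ∈ I, Φ n * P n ω ≤ ∑ n ∈ I, H n ω * P n ω := by
      filter_upwards [hP0, hPs1] with ω h0 h1
      have h2 : ∀ n ∈ I, mf Φ ω * P n ω ≤ (H n ω - Φ n) * P n ω := by
        intro n hn
        refine mul_le_mul_of_nonneg_right ?_ (h0 n hn)
        simp only [hmfdef]
        exact Finset.inf'_le _ hn
      have h3 : mf Φ ω = ∑ n ∈ I, mf Φ ω * P n ω := by
        rw [← Finset.mul_sum, h1, mul_one]
      have h4 : ∑ n ∈ I, (H n ω - Φ n) * P n ω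
          = ∑ n ∈ I, H n ω * P n ω - ∑ n ∈ I, Φ n * P n ω := by
        rw [← Finset.sum_sub_distrib]
        exact Finset.sum_congr rfl (fun n _ => by ring)
      have h5 := Finset.sum_le_sum h2
      linarith
    have hint2 : Integrable (fun ω => ∑ n ∈ I, Φ n * P n ω) ℙ :=
      integrable_finset_sum I (fun n hn => (hPint1 n hn).const_mul (Φ n))
    have hmono := integral_mono_ae ((hmfint Φ).add hint2) (integrable_finset_sum I hHP) hkey
    have heq : ∫ ω, (mf Φ ω + ∑ n ∈ I, Φ n * P n ω) ∂ℙ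
        = (∫ ω, mf Φ ω ∂ℙ) + ∑ n ∈ I, Φ n * p n := by
      rw [integral_add (hmfint Φ) hint2, integral_finset_sum I
        (fun n hn => (hPint1 n hn).const_mul (Φ n))]
      congr 1
      refine Finset.sum_congr rfl (fun n hn => ?_)
      rw [integral_const_mul, hPm n hn]
    simp only [hgfdef]
    refine le_trans (le_of_eq heq.symm) ?_
    exact hmono
  -- primal nonempty
  have hSpne : Sp.Nonempty := by
    rw [hSp]
    refine ⟨_, fun n ω => p n, fun n _ => (measurable_const : Measurable[mF] _),
      ae_of_all _ (fun ω n hn => (hp0 n hn).le), ae_of_all _ (fun ω => hp1),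
      fun n hn => by simp [measure_univ], rfl⟩
  have hSdne : Sd.Nonempty := ⟨gf 0, ⟨0, fun n _ => le_rfl, rfl⟩⟩
  -- maximizer of the dual
  have hmaxex : ∃ Φs : ℕ → ℝ, (∀ n, 0 ≤ Φs n) ∧
      ∀ Φ : ℕ → ℝ, (∀ n ∈ I, 0 ≤ Φ n) → gf Φ ≤ gf Φs := by
    set δ : ℝ := I.inf' hI p with hδdef
    have hδpos : 0 < δ := by
      obtain ⟨i, hi, hval⟩ := Finset.exists_mem_eq_inf' hI p
      rw [hδdef, hval]
      exact hp0 i hi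
    set C0 : ℝ := I.sup' hI (fun n => ∫ ω, H n ω ∂ℙ) with hC0
    set R : ℝ := max 1 ((C0 - gf 0) / δ + 1) with hR
    have hR1 : (1:ℝ) ≤ R := le_max_left _ _
    have hR2 : (C0 - gf 0) / δ < R := lt_of_lt_of_le (lt_add_one _) (le_max_right _ _)
    have hcoer : ∀ Ψ : ℕ → ℝ, (∀ n ∈ I, 0 ≤ Ψ n) → (∃ i ∈ I, Ψ i = 0) →
        R < I.sup' hI Ψ → gf Ψ < gf 0 := by
      rintro Ψ hΨ0 ⟨i, hi, hΨi⟩ hRM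
      obtain ⟨j, hj, hMj⟩ := Finset.exists_mem_eq_sup' hI Ψ
      set M : ℝ := I.sup' hI Ψ with hM
      have hM0 : 0 ≤ M := by
        rw [hM]
        exact le_trans (le_of_eq hΨi.symm) (Finset.le_sup' Ψ hi)
      have h1 : ∫ ω, mf Ψ ω ∂ℙ ≤ (∫ ω, H j ω ∂ℙ) - M := by
        have hpt : ∀ ω, mf Ψ ω ≤ H j ω - M := by
          intro ω
          simp only [hmfdef]
          rw [hMj]
          exact Finset.inf'_le _ hj
        calc ∫ ω, mf Ψ ω ∂ℙ ≤ ∫ ω, (H j ω - M) ∂ℙ :=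
              integral_mono (hmfint Ψ) ((hHint j hj).sub (integrable_const M)) hpt
          _ = (∫ ω, H j ω ∂ℙ) - M := by
              rw [integral_sub (hHint j hj) (integrable_const M)]
              simp [measure_univ]
      have h2 : ∑ n ∈ I, Ψ n * p n ≤ M * (1 - p i) := by
        have e1 : ∑ n ∈ I, Ψ n * p n = ∑ n ∈ I.erase i, Ψ n * p n := by
          rw [← Finset.add_sum_erase I (fun n => Ψ n * p n) hi, hΨi, zero_mul, zero_add]
        have e2 : ∑ n ∈ I.erase i, Ψ n * p n ≤ ∑ n ∈ I.erase i, M * p n := by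
          refine Finset.sum_le_sum (fun n hn => ?_)
          have hnI : n ∈ I := Finset.mem_of_mem_erase hn
          have hΨM : Ψ n ≤ M := by rw [hM]; exact Finset.le_sup' Ψ hnI
          exact mul_le_mul_of_nonneg_right hΨM (hp0 n hnI).le
        have e4 : p i + ∑ n ∈ I.erase i, p n = 1 := by
          rw [Finset.add_sum_erase I p hi, hp1]
        have e3 : ∑ n ∈ I.erase i, M * p n = M * (1 - p i) := by
          rw [← Finset.mul_sum]
          congr 1
          linarith
        linarith
      have h3 : ∫ ω, H j ω ∂ℙ ≤ C0 := by
        rw [hC0]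
        exact Finset.le_sup' (fun n => ∫ ω, H n ω ∂ℙ) hj
      have h4 : δ ≤ p i := by rw [hδdef]; exact Finset.inf'_le _ hi
      have h5 : gf Ψ ≤ C0 - δ * M := by
        simp only [hgfdef]
        nlinarith
      have h6 : C0 - δ * M < gf 0 := by
        have h7 : (C0 - gf 0) / δ < M := lt_trans hR2 hRM
        rw [div_lt_iff₀ hδpos] at h7
        linarith
      linarith
    set exte : ((↥I) → ℝ) → (ℕ → ℝ) := fun φ n => if h : n ∈ I then φ ⟨n, h⟩ else 0 with hexte
    have hGlip : LipschitzWith 2 (fun φ : (↥I) → ℝ => gf (exte φ)) := by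
      refine LipschitzWith.of_dist_le_mul (fun φ ψ => ?_)
      have hKle : ∀ n ∈ I, |exte φ n - exte ψ n| ≤ dist φ ψ := by
        intro n hn
        simp only [hexte, dif_pos hn]
        rw [← Real.dist_eq]
        exact dist_le_pi_dist φ ψ ⟨n, hn⟩
      have h1 : |(∫ ω, mf (exte φ) ω ∂ℙ) - ∫ ω, mf (exte ψ) ω ∂ℙ| ≤ dist φ ψ := by
        rw [← integral_sub (hmfint _) (hmfint _), ← Real.norm_eq_abs]
        refine le_trans (norm_integral_le_integral_norm _) ?_
        have hptw : ∀ ω, ‖mf (exte φ) ω - mf (exte ψ) ω‖ ≤ dist φ ψ := by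
          intro ω
          rw [Real.norm_eq_abs]
          simp only [hmfdef]
          refine stmt15_abs_inf'_sub_inf'_le hI (fun n hn => ?_)
          have he : H n ω - exte φ n - (H n ω - exte ψ n) = -(exte φ n - exte ψ n) := by ring
          rw [he, abs_neg]
          exact hKle n hn
        calc ∫ ω, ‖mf (exte φ) ω - mf (exte ψ) ω‖ ∂ℙ ≤ ∫ ω, dist φ ψ ∂ℙ :=
              integral_mono ((hmfint _).sub (hmfint _)).norm (integrable_const _) hptw
          _ = dist φ ψ := by simp [measure_univ]
      have h2 : |(∑ n ∈ I, exte φ n * p n) - ∑ n ∈ I, exte ψ n * p n| ≤ dist φ ψ := by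
        rw [← Finset.sum_sub_distrib]
        refine le_trans (Finset.abs_sum_le_sum_abs _ _) ?_
        have hb : ∀ n ∈ I, |exte φ n * p n - exte ψ n * p n| ≤ dist φ ψ * p n := by
          intro n hn
          have he : exte φ n * p n - exte ψ n * p n = (exte φ n - exte ψ n) * p n := by ring
          rw [he, abs_mul, abs_of_nonneg (hp0 n hn).le]
          exact mul_le_mul_of_nonneg_right (hKle n hn) (hp0 n hn).le
        calc ∑ n ∈ I, |exte φ n * p n - exte ψ n * p n| ≤ ∑ n ∈ I, dist φ ψ * p n :=
              Finset.sum_le_sum hb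
          _ = dist φ ψ := by rw [← Finset.mul_sum, hp1, mul_one]
      have h3 : gf (exte φ) - gf (exte ψ)
          = ((∫ ω, mf (exte φ) ω ∂ℙ) - ∫ ω, mf (exte ψ) ω ∂ℙ)
            + ((∑ n ∈ I, exte φ n * p n) - ∑ n ∈ I, exte ψ n * p n) := by
        simp only [hgfdef]
        ring
      rw [Real.dist_eq, h3]
      refine le_trans (abs_add_le _ _) ?_
      have hc2 : ((2 : NNReal) : ℝ) = 2 := by norm_num
      rw [hc2]
      linarith
    have hmem0 : (0 : (↥I) → ℝ) ∈ Set.Icc (0 : (↥I) → ℝ) (fun _ => R) := by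
      rw [Set.mem_Icc]
      exact ⟨le_rfl, fun i => by dsimp; linarith⟩
    obtain ⟨φs, hφsmem, hφsmax⟩ :=
      (isCompact_Icc (a := (0 : (↥I) → ℝ)) (b := fun _ => R)).exists_isMaxOn
        ⟨0, hmem0⟩ hGlip.continuous.continuousOn
    rw [Set.mem_Icc] at hφsmem
    refine ⟨exte φs, ?_, ?_⟩
    · intro n
      simp only [hexte]
      by_cases h : n ∈ I
      · rw [dif_pos h]
        exact hφsmem.1 ⟨n, h⟩
      · rw [dif_neg h]
    · intro Φ hΦ0
      obtain ⟨i, hi, him0⟩ := Finset.exists_mem_eq_inf' hI Φ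
      set m0 : ℝ := I.inf' hI Φ with hm0
      set Ψ : ℕ → ℝ := fun n => if n ∈ I then Φ n - m0 else 0 with hΨ
      have hΨ0 : ∀ n ∈ I, 0 ≤ Ψ n := by
        intro n hn
        simp only [hΨ, if_pos hn]
        have h8 : m0 ≤ Φ n := by rw [hm0]; exact Finset.inf'_le _ hn
        linarith
      have hΨi : Ψ i = 0 := by
        simp only [hΨ, if_pos hi]
        rw [him0, sub_self]
      have hgfΨ : gf Ψ = gf Φ := by
        have e1 : gf Ψ = gf (fun n => Φ n - m0) :=
          hcongr _ _ (fun n hn => by simp [hΨ, if_pos hn])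
        have e2 : gf (fun n => Φ n - m0) = gf (fun n => Φ n + (-m0)) :=
          hcongr _ _ (fun n _ => by ring)
        rw [e1, e2, hshift]
      by_cases hMR : I.sup' hI Ψ ≤ R
      · set φ : (↥I) → ℝ := fun k => Ψ k.1 with hφ
        have hextφ : ∀ n ∈ I, exte φ n = Ψ n := by
          intro n hn
          simp only [hexte, hφ, dif_pos hn]
        have hmem : φ ∈ Set.Icc (0 : (↥I) → ℝ) (fun _ => R) := by
          rw [Set.mem_Icc]
          constructor
          · intro k
            exact hΨ0 k.1 k.2
          · intro k
            exact le_trans (Finset.le_sup' Ψ k.2) hMR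
        have h9 := isMaxOn_iff.mp hφsmax φ hmem
        calc gf Φ = gf Ψ := hgfΨ.symm
          _ = gf (exte φ) := (hcongr _ _ hextφ).symm
          _ ≤ gf (exte φs) := h9
      · push_neg at hMR
        have h7 := hcoer Ψ hΨ0 ⟨i, hi, hΨi⟩ hMR
        have h8 : gf 0 = gf (exte 0) :=
          hcongr _ _ (fun n hn => by simp [hexte])
        have h9 := isMaxOn_iff.mp hφsmax 0 hmem0
        calc gf Φ = gf Ψ := hgfΨ.symm
          _ ≤ gf 0 := h7.le
          _ = gf (exte 0) := h8
          _ ≤ gf (exte φs) := h9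
  obtain ⟨Φs, hΦs0, hΦsmax⟩ := hmaxex
  have hdir : ∀ (d : ℕ → ℝ) (t : ℝ), 0 < t →
      gf (fun n => Φs n + t * d n) ≤ gf Φs := by
    intro d t ht
    set dn : ℝ := I.sup' hI (fun n => |d n|) with hdn
    have hdn0 : 0 ≤ dn := by
      obtain ⟨n₀, hn₀⟩ := hI
      rw [hdn]
      exact le_trans (abs_nonneg (d n₀)) (Finset.le_sup' (fun n => |d n|) hn₀)
    have h1 : ∀ n ∈ I, 0 ≤ Φs n + t * d n + t * dn := by
      intro n hn
      have h2 : |d n| ≤ dn := by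
        rw [hdn]; exact Finset.le_sup' (fun n => |d n|) hn
      have h3 : -d n ≤ dn := le_trans (neg_le_abs _) h2
      have := hΦs0 n
      nlinarith
    calc gf (fun n => Φs n + t * d n)
        = gf (fun n => (Φs n + t * d n) + t * dn) := (hshift _ _).symm
      _ ≤ gf Φs := hΦsmax _ h1
  -- argmin sets
  set A : Ω → Finset ℕ := fun ω => I.filter (fun n => H n ω - Φs n = mf Φs ω) with hAdef
  have hAne : ∀ ω, (A ω).Nonempty := by
    intro ω
    obtain ⟨n, hn, hval⟩ := Finset.exists_mem_eq_inf' hI (fun n => H n ω - Φs n)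
    exact ⟨n, Finset.mem_filter.mpr ⟨hn, by rw [hmfdef]; exact hval.symm⟩⟩
  have hAI : ∀ ω, A ω ⊆ I := fun ω => Finset.filter_subset _ _
  set 𝒮 : Finset (Finset ℕ) := I.powerset.filter (fun S => S.Nonempty) with h𝒮def
  have h𝒮 : ∀ S ∈ 𝒮, S.Nonempty ∧ S ⊆ I := by
    intro S hS
    rw [h𝒮def, Finset.mem_filter, Finset.mem_powerset] at hS
    exact ⟨hS.2, hS.1⟩
  have hA𝒮 : ∀ ω, A ω ∈ 𝒮 := by
    intro ω
    rw [h𝒮def, Finset.mem_filter, Finset.mem_powerset]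
    exact ⟨hAI ω, hAne ω⟩
  have hΩSmeasF : ∀ S : Finset ℕ, MeasurableSet[mF] {ω | A ω = S} := by
    intro S
    by_cases hSI : S ⊆ I
    · have hset : {ω | A ω = S}
          = ⋂ n ∈ (I : Finset ℕ), {ω | n ∈ S ↔ H n ω - Φs n = mf Φs ω} := by
        ext ω
        simp only [Set.mem_setOf_eq, Set.mem_iInter]
        constructor
        · rintro rfl n hn
          constructor
          · intro hnA
            exact (Finset.mem_filter.mp hnA).2
          · intro hc
            exact Finset.mem_filter.mpr ⟨hn, hc⟩
        · intro h
          ext n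
          constructor
          · intro hnA
            have hnI : n ∈ I := hAI ω hnA
            exact (h n hnI).mpr (Finset.mem_filter.mp hnA).2
          · intro hnS
            have hnI : n ∈ I := hSI hnS
            exact Finset.mem_filter.mpr ⟨hnI, (h n hnI).mp hnS⟩
      rw [hset]
      refine MeasurableSet.biInter (I : Finset ℕ).countable_toSet (fun n hn => ?_)
      have h1 : Measurable[mF] (fun ω => H n ω - Φs n) := (hHmeas n hn).sub measurable_const
      have h2 : Measurable[mF] (mf Φs) := hmfmeasF Φs
      by_cases hnS : n ∈ S
      · have : {ω : Ω | n ∈ S ↔ H n ω - Φs n = mf Φs ω} = {ω | H n ω - Φs n = mf Φs ω} := by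
          ext ω; simp [hnS]
        rw [this]
        exact measurableSet_eq_fun h1 h2
      · have : {ω : Ω | n ∈ S ↔ H n ω - Φs n = mf Φs ω}
            = {ω : Ω | H n ω - Φs n = mf Φs ω}ᶜ := by
          ext ω; simp [hnS]
        rw [this]
        exact (measurableSet_eq_fun h1 h2).compl
    · have hset : {ω | A ω = S} = (∅ : Set Ω) := by
        ext ω
        simp only [Set.mem_setOf_eq, Set.mem_empty_iff_false, iff_false]
        intro hcontra
        exact hSI (hcontra ▸ hAI ω)
      rw [hset]
      exact @MeasurableSet.empty Ω mF
  have hΩSmeas : ∀ S, MeasurableSet {ω | A ω = S} := fun S => hmF _ (hΩSmeasF S)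
  set c : Finset ℕ → ℝ := fun S => (ℙ {ω | A ω = S}).toReal with hcdef
  -- partition decomposition
  have hpart : ∀ h : Finset ℕ → ℝ, (fun ω => h (A ω)) =
      fun ω => ∑ S ∈ 𝒮.attach, Set.indicator {ω' | A ω' = S.1} (fun _ => h S.1) ω := by
    intro h
    funext ω
    rw [Finset.sum_eq_single_of_mem (⟨A ω, hA𝒮 ω⟩ : ↥𝒮) (Finset.mem_attach _ _)]
    · rw [Set.indicator_of_mem]
      exact Set.mem_setOf_eq ▸ rfl
    · intro S _ hS
      refine Set.indicator_of_notMem (fun hmem => hS ?_) _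
      have : A ω = S.1 := hmem
      exact Subtype.ext this.symm
  have hint_part : ∀ h : Finset ℕ → ℝ, ∫ ω, h (A ω) ∂ℙ = ∑ S ∈ 𝒮.attach, c S.1 * h S.1 := by
    intro h
    rw [show (fun ω => h (A ω)) = _ from hpart h, integral_finset_sum _
      (fun S _ => (integrable_const (h S.1)).indicator (hΩSmeas S.1))]
    refine Finset.sum_congr rfl (fun S _ => ?_)
    rw [integral_indicator_const _ (hΩSmeas S.1), smul_eq_mul, hcdef]
    rfl
  have hmeas_part : ∀ h : Finset ℕ → ℝ, Measurable[mF] (fun ω => h (A ω)) := by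
    intro h
    rw [show (fun ω => h (A ω)) = _ from hpart h]
    exact Finset.measurable_sum _ (fun S _ =>
      Measurable.indicator (measurable_const : Measurable[mF] fun _ : Ω => h S.1)
        (hΩSmeasF S.1))
  -- the dual inequality (directional derivatives + dominated convergence)
  have hdual : ∀ d : ℕ → ℝ, ∑ n ∈ I, d n * p n ≤
      ∑ S ∈ 𝒮.attach, c S.1 * S.1.sup' (h𝒮 S.1 S.2).1 d := by
    intro d
    set dn : ℝ := I.sup' hI (fun n => |d n|) with hdn
    have hdmem : ∀ n ∈ I, |d n| ≤ dn := by
      intro n hn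
      rw [hdn]
      exact Finset.le_sup' (fun m => |d m|) hn
    have hdn0 : 0 ≤ dn := by
      obtain ⟨n₀, h₀⟩ := hI
      exact le_trans (abs_nonneg _) (hdmem n₀ h₀)
    set sd : Finset ℕ → ℝ := fun S => if h : S.Nonempty then S.sup' h d else 0 with hsd
    set md : Ω → ℝ := fun ω => sd (A ω) with hmddef
    have hmdA : ∀ ω, md ω = (A ω).sup' (hAne ω) d := by
      intro ω
      simp only [hmddef, hsd, dif_pos (hAne ω)]
    have hmdb : ∀ ω, |md ω| ≤ dn := by
      intro ω
      rw [hmdA ω]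
      obtain ⟨n, hnA, hsup⟩ := Finset.exists_mem_eq_sup' (hAne ω) d
      rw [hsup]
      exact hdmem n (hAI ω hnA)
    set t : ℕ → ℝ := fun k => 1 / (k + 1) with ht
    have ht0 : ∀ k, 0 < t k := fun k => by rw [ht]; positivity
    set F : ℕ → Ω → ℝ :=
      fun k ω => (mf (fun n => Φs n + t k * d n) ω - mf Φs ω) / t k with hF
    have hFb : ∀ k ω, |F k ω| ≤ dn := by
      intro k ω
      have h1 : |mf (fun n => Φs n + t k * d n) ω - mf Φs ω| ≤ t k * dn := by
        simp only [hmfdef]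
        refine stmt15_abs_inf'_sub_inf'_le hI (fun n hn => ?_)
        have he : H n ω - (Φs n + t k * d n) - (H n ω - Φs n) = -(t k * d n) := by ring
        rw [he, abs_neg, abs_mul, abs_of_pos (ht0 k)]
        exact mul_le_mul_of_nonneg_left (hdmem n hn) (ht0 k).le
      simp only [hF]
      rw [abs_div, abs_of_pos (ht0 k), div_le_iff₀ (ht0 k)]
      linarith
    have hFlim : ∀ ω, Tendsto (fun k => F k ω) atTop (nhds (-md ω)) := by
      intro ω
      set m : ℝ := mf Φs ω with hm
      set ε : ℝ := if h : (I \ A ω).Nonempty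
        then (I \ A ω).inf' h (fun n => (H n ω - Φs n) - m) else 1 with hε
      have hεpos : 0 < ε := by
        rw [hε]
        split_ifs with h
        · obtain ⟨n, hn, hval⟩ := Finset.exists_mem_eq_inf' h (fun n => (H n ω - Φs n) - m)
          rw [hval]
          have hnI : n ∈ I := (Finset.mem_sdiff.mp hn).1
          have hnA : n ∉ A ω := (Finset.mem_sdiff.mp hn).2
          have hge : m ≤ H n ω - Φs n := by
            rw [hm]
            simp only [hmfdef]
            exact Finset.inf'_le _ hnI
          have hne : H n ω - Φs n ≠ m := by
            intro hcontra
            refine hnA (Finset.mem_filter.mpr ⟨hnI, ?_⟩)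
            rw [hm] at hcontra
            exact hcontra
          have := lt_of_le_of_ne hge (Ne.symm hne)
          linarith
        · norm_num
      have hkey : ∀ s : ℝ, 0 < s → s * (2 * dn + 1) ≤ ε →
          mf (fun n => Φs n + s * d n) ω = m - s * md ω := by
        intro s hs hsε
        simp only [hmfdef]
        have hcong : ∀ n ∈ I, H n ω - (Φs n + s * d n) = (H n ω - Φs n) - s * d n :=
          fun n _ => by ring
        rw [Finset.inf'_congr hI rfl hcong]
        apply le_antisymm
        · obtain ⟨n₀, hn₀, hd₀⟩ := Finset.exists_mem_eq_sup' (hAne ω) d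
          have hn₀I : n₀ ∈ I := hAI ω hn₀
          have h₀ : H n₀ ω - Φs n₀ = m := by
            rw [hm]
            exact (Finset.mem_filter.mp hn₀).2
          have hmd₀ : md ω = d n₀ := by rw [hmdA ω, hd₀]
          calc I.inf' hI (fun n => (H n ω - Φs n) - s * d n)
              ≤ (H n₀ ω - Φs n₀) - s * d n₀ := Finset.inf'_le _ hn₀I
            _ = m - s * md ω := by rw [h₀, hmd₀]
        · refine Finset.le_inf' _ _ (fun n hn => ?_)
          by_cases hnA : n ∈ A ω
          · have h₀ : H n ω - Φs n = m := by
              rw [hm]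
              exact (Finset.mem_filter.mp hnA).2
            have hdle : d n ≤ md ω := by
              rw [hmdA ω]
              exact Finset.le_sup' d hnA
            rw [h₀]
            nlinarith
          · have hgap : ε ≤ (H n ω - Φs n) - m := by
              have hmemsd : n ∈ I \ A ω := Finset.mem_sdiff.mpr ⟨hn, hnA⟩
              rw [hε, dif_pos ⟨n, hmemsd⟩]
              exact Finset.inf'_le _ hmemsd
            have hd1 : d n ≤ dn := le_trans (le_abs_self _) (hdmem n hn)
            have hd2 : -dn ≤ md ω := by
              have h10 := hmdb ω
              rw [abs_le] at h10
              linarith [h10.1]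
            nlinarith
      have heventl : ∀ᶠ k in atTop, F k ω = -md ω := by
        have htend : Tendsto (fun k : ℕ => t k * (2 * dn + 1)) atTop (nhds 0) := by
          have h11 := tendsto_one_div_add_atTop_nhds_zero_nat.mul_const (2 * dn + 1)
          rw [zero_mul] at h11
          simp only [ht]
          exact h11
        filter_upwards [htend.eventually_lt_const hεpos] with k hk
        have h12 := hkey (t k) (ht0 k) hk.le
        simp only [hF]
        rw [h12, ← hm]
        field_simp
        rw [sub_sub_cancel_left, neg_div, mul_div_cancel_left₀ _ (ht0 k).ne']
      exact Tendsto.congr' (heventl.mono (fun k h => h.symm)) tendsto_const_nhds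
    have hFint : ∀ k, Integrable (F k) ℙ := by
      intro k
      simp only [hF]
      exact ((hmfint _).sub (hmfint Φs)).div_const _
    have hklim := tendsto_integral_of_dominated_convergence (F := F)
      (f := fun ω => -md ω) (fun _ => dn)
      (fun k => (hFint k).aestronglyMeasurable) (integrable_const dn)
      (fun k => ae_of_all _ (fun ω => by rw [Real.norm_eq_abs]; exact hFb k ω))
      (ae_of_all _ hFlim)
    have hFle : ∀ k, ∫ ω, F k ω ∂ℙ ≤ -∑ n ∈ I, d n * p n := by
      intro k
      have h1 := hdir d (t k) (ht0 k)
      simp only [hgfdef] at h1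
      have h2 : ∑ n ∈ I, (Φs n + t k * d n) * p n
          = ∑ n ∈ I, Φs n * p n + t k * ∑ n ∈ I, d n * p n := by
        rw [Finset.mul_sum, ← Finset.sum_add_distrib]
        exact Finset.sum_congr rfl (fun n _ => by ring)
      rw [h2] at h1
      have h3 : ∫ ω, F k ω ∂ℙ
          = ((∫ ω, mf (fun n => Φs n + t k * d n) ω ∂ℙ) - ∫ ω, mf Φs ω ∂ℙ) / t k := by
        simp only [hF]
        rw [integral_div, integral_sub (hmfint _) (hmfint Φs)]
      rw [h3, div_le_iff₀ (ht0 k)]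
      linarith
    have hmdint : Integrable md ℙ := by
      refine (integrable_const dn).mono'
        ((hmeas_part sd).mono hmF le_rfl).aestronglyMeasurable (ae_of_all _ (fun ω => ?_))
      rw [Real.norm_eq_abs]
      exact hmdb ω
    have hlim2 : ∫ ω, -md ω ∂ℙ ≤ -∑ n ∈ I, d n * p n :=
      le_of_tendsto hklim (Filter.Eventually.of_forall hFle)
    rw [integral_neg] at hlim2
    have hfinal : ∑ n ∈ I, d n * p n ≤ ∫ ω, md ω ∂ℙ := by linarith
    have h5 : ∫ ω, md ω ∂ℙ = ∑ S ∈ 𝒮.attach, c S.1 * sd S.1 := hint_part sd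
    refine le_trans hfinal ?_
    rw [h5]
    refine le_of_eq (Finset.sum_congr rfl (fun S _ => ?_))
    simp only [hsd, dif_pos (h𝒮 S.1 S.2).1]
  obtain ⟨q, hq0, hqsupp, hqsum, hqmarg⟩ :=
    stmt15_strassen I p 𝒮 h𝒮 c (fun S => ENNReal.toReal_nonneg) hdual
  -- bounds for q
  have hqle1 : ∀ S ∈ 𝒮, ∀ n, q S n ≤ 1 := by
    intro S hS n
    by_cases hn : n ∈ I
    · rw [← hqsum S hS]
      exact Finset.single_le_sum (f := fun m => q S m) (fun m _ => hq0 S m) hn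
    · rw [hqsupp S n (fun hns => hn ((h𝒮 S hS).2 hns))]
      norm_num
  -- the candidate primal: P n ω = q (A ω) n
  have hPmeasF : ∀ n, Measurable[mF] (fun ω => q (A ω) n) :=
    fun n => hmeas_part (fun S => q S n)
  have hPint : ∀ n, Integrable (fun ω => q (A ω) n) ℙ := by
    intro n
    refine (integrable_const (1 : ℝ)).mono'
      ((hPmeasF n).mono hmF le_rfl).aestronglyMeasurable (ae_of_all _ (fun ω => ?_))
    rw [Real.norm_eq_abs, abs_of_nonneg (hq0 _ n)]
    exact hqle1 _ (hA𝒮 ω) n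
  have hPmarg : ∀ n ∈ I, ∫ ω, q (A ω) n ∂ℙ = p n := by
    intro n hn
    rw [hint_part (fun S => q S n), Finset.sum_attach 𝒮 (fun S => c S * q S n), hqmarg n,
      if_pos hn]
  -- value of the primal candidate
  have hHPint : ∀ n ∈ I, Integrable (fun ω => H n ω * q (A ω) n) ℙ := by
    intro n hn
    refine (hHint n hn).abs.mono'
      (((hHmeas n hn).mono hmF le_rfl).mul ((hPmeasF n).mono hmF le_rfl)).aestronglyMeasurable
      (ae_of_all _ (fun ω => ?_))
    rw [Real.norm_eq_abs, abs_mul]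
    have h1 : |q (A ω) n| ≤ 1 := by
      rw [abs_of_nonneg (hq0 _ n)]; exact hqle1 _ (hA𝒮 ω) n
    nlinarith [abs_nonneg (H n ω), abs_nonneg (q (A ω) n)]
  have hvalpt : ∀ ω, ∑ n ∈ I, H n ω * q (A ω) n = mf Φs ω + ∑ n ∈ I, Φs n * q (A ω) n := by
    intro ω
    have h1 : ∀ n ∈ I, (H n ω - Φs n) * q (A ω) n = mf Φs ω * q (A ω) n := by
      intro n hn
      by_cases hnA : n ∈ A ω
      · have h2 : H n ω - Φs n = mf Φs ω := by
          have := Finset.mem_filter.mp (hAdef ▸ hnA)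
          exact this.2
        rw [h2]
      · rw [hqsupp (A ω) n hnA, mul_zero, mul_zero]
    have h2 : ∑ n ∈ I, (H n ω - Φs n) * q (A ω) n = mf Φs ω := by
      rw [Finset.sum_congr rfl h1, ← Finset.mul_sum, hqsum (A ω) (hA𝒮 ω), mul_one]
    have h3 : ∀ n ∈ I, H n ω * q (A ω) n
        = (H n ω - Φs n) * q (A ω) n + Φs n * q (A ω) n := fun n _ => by ring
    rw [Finset.sum_congr rfl h3, Finset.sum_add_distrib, h2]
  have hvalue : ∫ ω, ∑ n ∈ I, H n ω * q (A ω) n ∂ℙ = gf Φs := by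
    rw [show (fun ω => ∑ n ∈ I, H n ω * q (A ω) n)
        = fun ω => mf Φs ω + ∑ n ∈ I, Φs n * q (A ω) n from funext hvalpt]
    rw [integral_add (hmfint Φs) (integrable_finset_sum I
      (fun n _ => (hPint n).const_mul (Φs n)))]
    rw [integral_finset_sum I (fun n _ => (hPint n).const_mul (Φs n))]
    rw [hgfdef]
    congr 1
    refine Finset.sum_congr rfl (fun n hn => ?_)
    rw [integral_const_mul, hPmarg n hn]
  -- the common value
  have hvSp : (∫ ω, ∑ n ∈ I, H n ω * q (A ω) n ∂ℙ) ∈ Sp := by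
    rw [hSp]
    exact ⟨fun n ω => q (A ω) n, fun n _ => hPmeasF n, ae_of_all _ (fun ω n _ => hq0 _ n),
      ae_of_all _ (fun ω => hqsum (A ω) (hA𝒮 ω)), hPmarg, rfl⟩
  have hvSd : (∫ ω, ∑ n ∈ I, H n ω * q (A ω) n ∂ℙ) ∈ Sd := by
    rw [hSd]
    exact ⟨Φs, fun n _ => hΦs0 n, hvalue⟩
  -- conclusion
  show sInf Sp = sSup Sd
  have hbddBelow : BddBelow Sp := by
    obtain ⟨w, hw⟩ := hSdne
    exact ⟨w, fun v hv => hweak v hv w hw⟩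
  have hbddAbove : BddAbove Sd := by
    obtain ⟨v, hv⟩ := hSpne
    exact ⟨v, fun w hw => hweak v hv w hw⟩
  apply le_antisymm
  · exact le_trans (csInf_le hbddBelow hvSp) (le_csSup hbddAbove hvSd)
  · exact csSup_le hSdne (fun w hw => le_csInf hSpne (fun v hv => hweak v hv w hw))
end

section
/- Concavity and supergradient of the sample dual objective: fix a ∈ ℝ^{N−1} and q¹, …, q^{N−1} ∈ ℝ, and define W : ℝ^{N−1} → ℝ by W(ζ) := Σ_{n=1}^{N−1} ζⁿ qⁿ + min_{1 ≤ n ≤ N−1} (aⁿ − ζⁿ)₋, where x₋ := min(x, 0). Then W is concave; moreover, defining for each 1 ≤ n ≤ N−1 the set Lⁿ(ζ) := {aⁿ − ζⁿ < 0} ∩ {aⁿ − ζⁿ < min_{j < n}(aʲ − ζʲ)} ∩ {aⁿ − ζⁿ = min_{j ≥ n}(aʲ − ζʲ)} (so that the Lⁿ(ζ) are pairwise disjoint), the vector g(ζ) ∈ ℝ^{N−1} with components gⁿ(ζ) := qⁿ − 1_{Lⁿ(ζ)} is a supergradient of W at ζ: W(ζ') ≤ W(ζ) + ⟨g(ζ),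 ζ' − ζ⟩ for all ζ' ∈ ℝ^{N−1}. -/
/-- The sample dual objective
`W(ζ) = Σ_{n=1}^{N−1} ζⁿ qⁿ + min_{1 ≤ n ≤ N−1} (aⁿ − ζⁿ)₋`, where `x₋ = min(x,0)`. -/
noncomputable def Wfun (N : ℕ) (hne : (Finset.Icc 1 (N - 1)).Nonempty)
    (a q ζ : ℕ → ℝ) : ℝ :=
  ∑ n ∈ Finset.Icc 1 (N - 1), ζ n * q n
    + (Finset.Icc 1 (N - 1)).inf' hne (fun n => min (a n - ζ n) 0)

/-- The set (condition) `Lⁿ(ζ)`: `aⁿ − ζⁿ < 0`, `aⁿ − ζⁿ < min_{j<n}(aʲ − ζʲ)` (with the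
convention `min_∅ = +∞`), and `aⁿ − ζⁿ = min_{j≥n}(aʲ − ζʲ)`. -/
def Lcond (N : ℕ) (a ζ : ℕ → ℝ) (n : ℕ) : Prop :=
  a n - ζ n < 0 ∧
  (∀ j ∈ Finset.Icc 1 (n - 1), a n - ζ n < a j - ζ j) ∧
  (∀ j ∈ Finset.Icc n (N - 1), a n - ζ n ≤ a j - ζ j)

/-- the sample dual objective `W` is concave, the sets `Lⁿ(ζ)` are pairwise
disjoint, and the vector `g(ζ)` with components `gⁿ(ζ) = qⁿ − 1_{Lⁿ(ζ)}` is a supergradient of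
`W` at `ζ`. -/
theorem stmt17 (N : ℕ) (hN : 2 ≤ N) (a q : ℕ → ℝ) :
    (∀ ζ₁ ζ₂ : ℕ → ℝ, ∀ l : ℝ, 0 ≤ l → l ≤ 1 →
      l * Wfun N (Finset.nonempty_Icc.mpr (by omega)) a q ζ₁
          + (1 - l) * Wfun N (Finset.nonempty_Icc.mpr (by omega)) a q ζ₂
        ≤ Wfun N (Finset.nonempty_Icc.mpr (by omega)) a q
            (fun n => l * ζ₁ n + (1 - l) * ζ₂ n)) ∧
    (∀ ζ : ℕ → ℝ, ∀ m ∈ Finset.Icc 1 (N - 1), ∀ n ∈ Finset.Icc 1 (N - 1), m ≠ n →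
      ¬ (Lcond N a ζ m ∧ Lcond N a ζ n)) ∧
    (∀ ζ ζ' : ℕ → ℝ,
      Wfun N (Finset.nonempty_Icc.mpr (by omega)) a q ζ'
        ≤ Wfun N (Finset.nonempty_Icc.mpr (by omega)) a q ζ
          + ∑ n ∈ Finset.Icc 1 (N - 1),
              (q n - Set.indicator {k | Lcond N a ζ k} (fun _ => (1 : ℝ)) n)
                * (ζ' n - ζ n)) := by
  have hne : (Finset.Icc 1 (N - 1)).Nonempty := Finset.nonempty_Icc.mpr (by omega)
  -- disjointness (proved first, reused later)
  have hdisj : ∀ ζ : ℕ → ℝ, ∀ m ∈ Finset.Icc 1 (N - 1), ∀ n ∈ Finset.Icc 1 (N - 1),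
      m ≠ n → ¬ (Lcond N a ζ m ∧ Lcond N a ζ n) := by
    have key : ∀ ζ : ℕ → ℝ, ∀ m ∈ Finset.Icc 1 (N - 1), ∀ n ∈ Finset.Icc 1 (N - 1),
        m < n → Lcond N a ζ m → Lcond N a ζ n → False := by
      intro ζ m hm n hn hmn hLm hLn
      simp only [Finset.mem_Icc] at hm hn
      have h1 := hLm.2.2 n (Finset.mem_Icc.mpr ⟨le_of_lt hmn, hn.2⟩)
      have h2 := hLn.2.1 m (Finset.mem_Icc.mpr ⟨hm.1, by omega⟩)
      linarith
    intro ζ m hm n hn hmn ⟨hLm, hLn⟩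
    rcases lt_or_gt_of_ne hmn with h | h
    · exact key ζ m hm n hn h hLm hLn
    · exact key ζ n hn m hm h hLn hLm
  -- existence of the (unique) active index when the min is negative
  have hkey : ∀ ζ : ℕ → ℝ,
      (Finset.Icc 1 (N - 1)).inf' hne (fun n => min (a n - ζ n) 0) < 0 →
      ∃ m ∈ Finset.Icc 1 (N - 1),
        a m - ζ m = (Finset.Icc 1 (N - 1)).inf' hne (fun n => min (a n - ζ n) 0) ∧
        Lcond N a ζ m := by
    intro ζ hM
    set M := (Finset.Icc 1 (N - 1)).inf' hne (fun n => min (a n - ζ n) 0) with hMdef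
    obtain ⟨b, hb, hbM⟩ := Finset.exists_mem_eq_inf' hne (fun n => min (a n - ζ n) 0)
    have hbx : a b - ζ b ≤ M := by
      have heq : M = min (a b - ζ b) 0 := hbM
      rcases min_cases (a b - ζ b) (0 : ℝ) with ⟨h, _⟩ | ⟨h, _⟩ <;> linarith
    set T := (Finset.Icc 1 (N - 1)).filter (fun n => a n - ζ n ≤ M) with hT
    have hbT : b ∈ T := Finset.mem_filter.mpr ⟨hb, hbx⟩
    have hTne : T.Nonempty := ⟨b, hbT⟩
    set m := T.min' hTne with hmdef
    have hmT : m ∈ T := Finset.min'_mem T hTne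
    have hmS : m ∈ Finset.Icc 1 (N - 1) := (Finset.mem_filter.mp hmT).1
    have hmx : a m - ζ m ≤ M := (Finset.mem_filter.mp hmT).2
    have hlow : ∀ j ∈ Finset.Icc 1 (N - 1), M ≤ a j - ζ j := by
      intro j hj
      have h1 : M ≤ min (a j - ζ j) 0 := Finset.inf'_le _ hj
      have := min_le_left (a j - ζ j) (0 : ℝ)
      linarith
    have hmxeq : a m - ζ m = M := le_antisymm hmx (hlow m hmS)
    simp only [Finset.mem_Icc] at hmS
    refine ⟨m, Finset.mem_Icc.mpr hmS, hmxeq, ?_, ?_, ?_⟩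
    · rw [hmxeq]; exact hM
    · intro j hj
      simp only [Finset.mem_Icc] at hj
      have hjS : j ∈ Finset.Icc 1 (N - 1) := Finset.mem_Icc.mpr ⟨hj.1, by omega⟩
      have hjlt : j < m := by omega
      by_contra hcon
      push_neg at hcon
      have hjx : a j - ζ j ≤ M := by rw [← hmxeq]; linarith
      have hjT : j ∈ T := Finset.mem_filter.mpr ⟨hjS, hjx⟩
      have := Finset.min'_le T j hjT
      omega
    · intro j hj
      simp only [Finset.mem_Icc] at hj
      have hjS : j ∈ Finset.Icc 1 (N - 1) := Finset.mem_Icc.mpr ⟨by omega, hj.2⟩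
      rw [hmxeq]; exact hlow j hjS
  refine ⟨?_, hdisj, ?_⟩
  -- concavity
  · intro ζ₁ ζ₂ l hl0 hl1
    unfold Wfun
    have hl1' : (0 : ℝ) ≤ 1 - l := by linarith
    have hsum : ∑ n ∈ Finset.Icc 1 (N - 1), (l * ζ₁ n + (1 - l) * ζ₂ n) * q n
        = l * ∑ n ∈ Finset.Icc 1 (N - 1), ζ₁ n * q n
          + (1 - l) * ∑ n ∈ Finset.Icc 1 (N - 1), ζ₂ n * q n := by
      rw [Finset.mul_sum, Finset.mul_sum, ← Finset.sum_add_distrib]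
      exact Finset.sum_congr rfl fun n _ => by ring
    have hinf : l * (Finset.Icc 1 (N - 1)).inf' hne (fun n => min (a n - ζ₁ n) 0)
        + (1 - l) * (Finset.Icc 1 (N - 1)).inf' hne (fun n => min (a n - ζ₂ n) 0)
        ≤ (Finset.Icc 1 (N - 1)).inf' hne
            (fun n => min (a n - (l * ζ₁ n + (1 - l) * ζ₂ n)) 0) := by
      apply Finset.le_inf'
      intro n hn
      have i1 : (Finset.Icc 1 (N - 1)).inf' hne (fun n => min (a n - ζ₁ n) 0)
          ≤ min (a n - ζ₁ n) 0 := Finset.inf'_le _ hn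
      have i2 : (Finset.Icc 1 (N - 1)).inf' hne (fun n => min (a n - ζ₂ n) 0)
          ≤ min (a n - ζ₂ n) 0 := Finset.inf'_le _ hn
      have j1 := mul_le_mul_of_nonneg_left i1 hl0
      have j2 := mul_le_mul_of_nonneg_left i2 hl1'
      have m1l := min_le_left (a n - ζ₁ n) (0 : ℝ)
      have m1r := min_le_right (a n - ζ₁ n) (0 : ℝ)
      have m2l := min_le_left (a n - ζ₂ n) (0 : ℝ)
      have m2r := min_le_right (a n - ζ₂ n) (0 : ℝ)
      apply le_min
      · nlinarith
      · nlinarith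
    linarith
  -- supergradient
  · intro ζ ζ'
    unfold Wfun
    set M := (Finset.Icc 1 (N - 1)).inf' hne (fun n => min (a n - ζ n) 0) with hMdef
    set M' := (Finset.Icc 1 (N - 1)).inf' hne (fun n => min (a n - ζ' n) 0) with hM'def
    have hsplit : ∑ n ∈ Finset.Icc 1 (N - 1),
        (q n - Set.indicator {k | Lcond N a ζ k} (fun _ => (1 : ℝ)) n) * (ζ' n - ζ n)
        = (∑ n ∈ Finset.Icc 1 (N - 1), ζ' n * q n
            - ∑ n ∈ Finset.Icc 1 (N - 1), ζ n * q n)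
          - ∑ n ∈ Finset.Icc 1 (N - 1),
              Set.indicator {k | Lcond N a ζ k} (fun _ => (1 : ℝ)) n * (ζ' n - ζ n) := by
      rw [← Finset.sum_sub_distrib, ← Finset.sum_sub_distrib]
      exact Finset.sum_congr rfl fun n _ => by ring
    rw [hsplit]
    rcases lt_or_ge M 0 with hMneg | hMpos
    · obtain ⟨m, hmS, hmx, hLm⟩ := hkey ζ hMneg
      have hIeq : ∑ n ∈ Finset.Icc 1 (N - 1),
          Set.indicator {k | Lcond N a ζ k} (fun _ => (1 : ℝ)) n * (ζ' n - ζ n)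
          = ζ' m - ζ m := by
        rw [Finset.sum_eq_single_of_mem m hmS]
        · rw [Set.indicator_of_mem (show m ∈ {k | Lcond N a ζ k} from hLm)]
          ring
        · intro n hn hnm
          have hnL : ¬ Lcond N a ζ n := fun h => hdisj ζ n hn m hmS hnm ⟨h, hLm⟩
          rw [Set.indicator_of_notMem (show n ∉ {k | Lcond N a ζ k} from hnL)]
          ring
      rw [hIeq]
      have hM'le : M' ≤ a m - ζ' m :=
        le_trans (Finset.inf'_le _ hmS) (min_le_left _ _)
      linarith
    · have hnoL : ∀ n ∈ Finset.Icc 1 (N - 1), ¬ Lcond N a ζ n := by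
        intro n hn hL
        have h1 : M ≤ min (a n - ζ n) 0 := Finset.inf'_le _ hn
        have := min_le_left (a n - ζ n) (0 : ℝ)
        linarith [hL.1]
      have hI0 : ∑ n ∈ Finset.Icc 1 (N - 1),
          Set.indicator {k | Lcond N a ζ k} (fun _ => (1 : ℝ)) n * (ζ' n - ζ n) = 0 := by
        apply Finset.sum_eq_zero
        intro n hn
        rw [Set.indicator_of_notMem (show n ∉ {k | Lcond N a ζ k} from hnoL n hn)]
        ring
      rw [hI0]
      obtain ⟨b, hb⟩ := hne
      have hM'le : M' ≤ 0 :=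
        le_trans (Finset.inf'_le _ hb) (min_le_right _ _)
      linarith
end
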